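/- arXiv:2503.02043 — 6 statements merged into one kernel-verified Lean document; each statement's English description precedes it below -/
import Mathlib

section
/- (Elliptical potential lemma, Lemma C.1) For any sequence of vectors {a_t} ⊆ {a ∈ ℝ^d : ‖a‖ ≤ 1} and V_t := I + Σ_{s<t} a_s a_sᵀ, for every t: Σ_{s≤t} ‖a_s‖²_{V_s^{-1}} ≤ 2d log(1 + t/d) and Σ_{s≤t} ‖a_s‖_{V_s^{-1}} ≤ √(2 d t log(1 + t/d)). Furthermore, for all t and δ ∈ (0,1], ω_t(δ) ≤ 1 + √(½ log((m+1)/δ) + (d/2) log(1 + t/d)). -/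
open Finset
open scoped Matrix

/-- Weighted norm `‖v‖_M = ‖M^{1/2} v‖ = √(vᵀ M v)` for a positive-semidefinite matrix `M`. -/
noncomputable def wnorm {d : ℕ} (M : Matrix (Fin d) (Fin d) ℝ) (v : Fin d → ℝ) : ℝ :=
  Real.sqrt (v ⬝ᵥ M.mulVec v)

/-- `V_t = I + ∑_{s < t} a_s a_sᵀ` (rounds indexed from `1`). -/
noncomputable def Vmat {d : ℕ} (a : ℕ → Fin d → ℝ) (t : ℕ) : Matrix (Fin d) (Fin d) ℝ :=
  1 + ∑ s ∈ Finset.Ico 1 t, Matrix.vecMulVec (a s) (a s)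

/-- The confidence radius `ω_t(δ) = 1 + √(½ log((m+1)/δ) + ¼ log det V_t)`. -/
noncomputable def omrad (m : ℕ) (δ : ℝ) {d : ℕ} (V : Matrix (Fin d) (Fin d) ℝ) : ℝ :=
  1 + Real.sqrt ((1 / 2) * Real.log ((m + 1) / δ) + (1 / 4) * Real.log V.det)

/-!
By the matrix determinant lemma, `det V_{s+1} = det V_s · (1 + ‖a_s‖²_{V_s⁻¹})`, so the sum of
`log (1 + ‖a_s‖²_{V_s⁻¹})` over `s ≤ t` telescopes to `log det V_{t+1}`. Since `V_s ⪰ I` and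
`‖a_s‖ ≤ 1`, each `x = ‖a_s‖²_{V_s⁻¹}` lies in `[0, 1]`, where `x ≤ 2 log (1 + x)`. AM–GM on the
eigenvalues gives `det V_u ≤ (tr V_u / d)^d ≤ (1 + t/d)^d` for `u ≤ t + 1`, which yields the first
bound (with `u = t + 1`) and the third (with `u = t`); Cauchy–Schwarz turns the first into the
second.
-/

theorem Finset.prod_le_sum_div_card_pow {ι : Type*} (s : Finset ι) (z : ι → ℝ)
    (hz : ∀ i ∈ s, 0 ≤ z i) : ∏ i ∈ s, z i ≤ ((∑ i ∈ s, z i) / #s) ^ #s := by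
  rcases s.eq_empty_or_nonempty with rfl | hs
  · simp
  have amgm := Real.geom_mean_le_arith_mean s (fun _ => 1) z (fun _ _ => zero_le_one)
    (by simpa using hs.card_pos) hz
  simp only [Real.rpow_one, one_mul, sum_const, nsmul_eq_mul, mul_one] at amgm
  calc ∏ i ∈ s, z i = ((∏ i ∈ s, z i) ^ ((#s : ℝ)⁻¹)) ^ #s :=
        (Real.rpow_inv_natCast_pow (prod_nonneg hz) hs.card_ne_zero).symm
    _ ≤ ((∑ i ∈ s, z i) / #s) ^ #s :=
        pow_le_pow_left₀ (Real.rpow_nonneg (prod_nonneg hz) _) amgm _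

namespace Matrix

variable {n : Type*} [Fintype n]

theorem posSemidef_sum_vecMulVec_self {ι : Type*} (s : Finset ι) (a : ι → n → ℝ) :
    (∑ i ∈ s, vecMulVec (a i) (a i)).PosSemidef :=
  posSemidef_sum s fun i _ => by simpa using posSemidef_vecMulVec_self_star (a i)

variable [DecidableEq n]

theorem PosSemidef.det_le_trace_div_card_pow {M : Matrix n n ℝ} (hM : M.PosSemidef) :
    M.det ≤ (M.trace / Fintype.card n) ^ Fintype.card n := by
  have hdet : M.det = ∏ i, hM.isHermitian.eigenvalues i := by
    simpa using hM.isHermitian.det_eq_prod_eigenvalues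
  have htr : M.trace = ∑ i, hM.isHermitian.eigenvalues i := by
    simpa using hM.isHermitian.trace_eq_sum_eigenvalues
  rw [hdet, htr]
  exact Finset.prod_le_sum_div_card_pow _ _ fun i _ => hM.eigenvalues_nonneg i

theorem dotProduct_one_add_inv_mulVec_le {P : Matrix n n ℝ} (hP : P.PosSemidef) (v : n → ℝ) :
    v ⬝ᵥ (1 + P)⁻¹ *ᵥ v ≤ v ⬝ᵥ v := by
  have hPD : (1 + P).PosDef := PosDef.one.add_posSemidef hP
  set b := (1 + P)⁻¹ *ᵥ v
  have hv : (1 + P) *ᵥ b = v := by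
    rw [mulVec_mulVec, mul_nonsing_inv _ hPD.det_pos.ne'.isUnit, one_mulVec]
  rw [add_mulVec, one_mulVec] at hv
  -- `vᵀb = bᵀ(1 + P)b ≥ bᵀb`, and Cauchy–Schwarz gives `(vᵀb)² ≤ (vᵀv)(bᵀb)`.
  have hbb : b ⬝ᵥ b ≤ v ⬝ᵥ b := by
    have := hP.dotProduct_mulVec_nonneg b
    simp only [star_trivial] at this
    rw [← hv, add_dotProduct, dotProduct_comm (P *ᵥ b)]
    linarith
  have hcs : (v ⬝ᵥ b) ^ 2 ≤ (v ⬝ᵥ v) * (b ⬝ᵥ b) := by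
    simpa [dotProduct, sq] using sum_mul_sq_le_sq_mul_sq Finset.univ v b
  have hvb : 0 ≤ v ⬝ᵥ b := by
    simpa [star_trivial] using hPD.inv.posSemidef.dotProduct_mulVec_nonneg v
  have hvv : 0 ≤ v ⬝ᵥ v := by simpa using dotProduct_star_self_nonneg v
  nlinarith

end Matrix

theorem Real.le_two_mul_log_one_add {x : ℝ} (h0 : 0 ≤ x) (h1 : x ≤ 1) :
    x ≤ 2 * Real.log (1 + x) := by
  have hlog := Real.one_sub_inv_le_log_of_pos (by linarith : 0 < 1 + x)
  have hinv : (1 + x)⁻¹ ≤ 1 - x / 2 := by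
    rw [inv_le_iff_one_le_mul₀ (by linarith)]
    nlinarith
  linarith

theorem wnorm_sq {d : ℕ} {M : Matrix (Fin d) (Fin d) ℝ} (hM : M.PosSemidef) (v : Fin d → ℝ) :
    wnorm M v ^ 2 = v ⬝ᵥ M *ᵥ v :=
  Real.sq_sqrt (by simpa using hM.dotProduct_mulVec_nonneg v)

section Vmat

variable {d : ℕ} (a : ℕ → Fin d → ℝ)

theorem posDef_Vmat (t : ℕ) : (Vmat a t).PosDef :=
  Matrix.PosDef.one.add_posSemidef (Matrix.posSemidef_sum_vecMulVec_self _ a)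

theorem dotProduct_Vmat_inv_mulVec_nonneg (t : ℕ) : 0 ≤ a t ⬝ᵥ (Vmat a t)⁻¹ *ᵥ a t := by
  simpa using (posDef_Vmat a t).inv.posSemidef.dotProduct_mulVec_nonneg (a t)

theorem Vmat_succ {t : ℕ} (ht : 1 ≤ t) :
    Vmat a (t + 1) = Vmat a t + Matrix.vecMulVec (a t) (a t) := by
  rw [Vmat, sum_Ico_succ_top ht, Vmat, add_assoc]

theorem det_Vmat_succ {t : ℕ} (ht : 1 ≤ t) :
    (Vmat a (t + 1)).det = (Vmat a t).det * (1 + a t ⬝ᵥ (Vmat a t)⁻¹ *ᵥ a t) := by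
  rw [Vmat_succ a ht, Matrix.vecMulVec_eq Unit,
    Matrix.det_add_replicateCol_mul_replicateRow (posDef_Vmat a t).det_pos.ne'.isUnit]
  congr 1
  rw [Matrix.det_unique, Matrix.add_apply, Matrix.one_apply_eq, ← Matrix.replicateRow_vecMul,
    Matrix.replicateRow_mul_replicateCol_apply, ← Matrix.dotProduct_mulVec]

theorem sum_log_one_add_eq_log_det_Vmat (t : ℕ) :
    ∑ s ∈ Icc 1 t, Real.log (1 + a s ⬝ᵥ (Vmat a s)⁻¹ *ᵥ a s) = Real.log (Vmat a (t + 1)).det := by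
  induction t with
  | zero => simp [Vmat]
  | succ t ih =>
    have hx := dotProduct_Vmat_inv_mulVec_nonneg a (t + 1)
    rw [sum_Icc_succ_top (by omega : 1 ≤ t + 1), ih, det_Vmat_succ a (by omega : 1 ≤ t + 1),
      Real.log_mul (posDef_Vmat a (t + 1)).det_pos.ne' (by positivity)]

theorem trace_Vmat (t : ℕ) : (Vmat a t).trace = d + ∑ s ∈ Ico 1 t, a s ⬝ᵥ a s := by
  rw [Vmat, Matrix.trace_add, Matrix.trace_one, Matrix.trace_sum, Fintype.card_fin]
  simp [Matrix.trace, Matrix.vecMulVec_apply, dotProduct]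

variable {a} (ha : ∀ s, a s ⬝ᵥ a s ≤ 1)
include ha

theorem det_Vmat_le {t n : ℕ} (htn : t ≤ n + 1) : (Vmat a t).det ≤ (1 + n / d) ^ d := by
  have hsum : ∑ s ∈ Ico 1 t, a s ⬝ᵥ a s ≤ n :=
    (sum_le_card_nsmul (Ico 1 t) _ 1 fun s _ => ha s).trans <| by
      rw [Nat.card_Ico, nsmul_one]
      exact_mod_cast (by omega : t - 1 ≤ n)
  have htr : (Vmat a t).trace ≤ d + n := by rw [trace_Vmat]; linarith
  calc (Vmat a t).det ≤ ((Vmat a t).trace / d) ^ d := by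
        simpa using (posDef_Vmat a t).posSemidef.det_le_trace_div_card_pow
    _ ≤ (1 + n / d) ^ d := by
        gcongr
        · exact div_nonneg (posDef_Vmat a t).posSemidef.trace_nonneg d.cast_nonneg
        · calc (Vmat a t).trace / d ≤ (d + n) / d := by gcongr
            _ = d / d + n / d := add_div _ _ _
            _ ≤ 1 + n / d := by gcongr; exact div_self_le_one _

theorem dotProduct_Vmat_inv_mulVec_le_one (t : ℕ) : a t ⬝ᵥ (Vmat a t)⁻¹ *ᵥ a t ≤ 1 :=
  (Matrix.dotProduct_one_add_inv_mulVec_le (Matrix.posSemidef_sum_vecMulVec_self _ a) _).trans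
    (ha t)

end Vmat

theorem elliptical_potential_general (d m : ℕ)
    (a : ℕ → Fin d → ℝ) (ha : ∀ s, Real.sqrt (∑ i, a s i ^ 2) ≤ 1) (t : ℕ) :
    (∑ s ∈ Finset.Icc 1 t, (wnorm (Vmat a s)⁻¹ (a s)) ^ 2
        ≤ 2 * d * Real.log (1 + (t : ℝ) / d))
    ∧ (∑ s ∈ Finset.Icc 1 t, wnorm (Vmat a s)⁻¹ (a s)
        ≤ Real.sqrt (2 * d * t * Real.log (1 + (t : ℝ) / d)))
    ∧ ∀ δ : ℝ, δ ∈ Set.Ioc (0 : ℝ) 1 →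
        omrad m δ (Vmat a t)
          ≤ 1 + Real.sqrt ((1 / 2) * Real.log ((m + 1) / δ)
              + ((d : ℝ) / 2) * Real.log (1 + (t : ℝ) / d)) := by
  have hnorm : ∀ s, a s ⬝ᵥ a s ≤ 1 := fun s => by simpa [dotProduct, sq] using ha s
  have hdet : ∀ {u}, u ≤ t + 1 → Real.log (Vmat a u).det ≤ d * Real.log (1 + (t : ℝ) / d) :=
    fun hu => (Real.log_le_log (posDef_Vmat a _).det_pos (det_Vmat_le hnorm hu)).trans_eq
      (Real.log_pow _ _)
  have hsq : ∑ s ∈ Icc 1 t, wnorm (Vmat a s)⁻¹ (a s) ^ 2 ≤ 2 * d * Real.log (1 + (t : ℝ) / d) :=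
    calc ∑ s ∈ Icc 1 t, wnorm (Vmat a s)⁻¹ (a s) ^ 2
        = ∑ s ∈ Icc 1 t, a s ⬝ᵥ (Vmat a s)⁻¹ *ᵥ a s :=
          sum_congr rfl fun s _ => wnorm_sq (posDef_Vmat a s).inv.posSemidef _
      _ ≤ ∑ s ∈ Icc 1 t, 2 * Real.log (1 + a s ⬝ᵥ (Vmat a s)⁻¹ *ᵥ a s) :=
          sum_le_sum fun s _ => Real.le_two_mul_log_one_add
            (dotProduct_Vmat_inv_mulVec_nonneg a s) (dotProduct_Vmat_inv_mulVec_le_one hnorm s)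
      _ = 2 * Real.log (Vmat a (t + 1)).det := by
          rw [← mul_sum, sum_log_one_add_eq_log_det_Vmat]
      _ ≤ 2 * d * Real.log (1 + (t : ℝ) / d) := by linarith [hdet le_rfl]
  refine ⟨hsq, ?_, fun δ _ => ?_⟩
  · refine (le_abs_self _).trans (Real.abs_le_sqrt ?_)
    calc (∑ s ∈ Icc 1 t, wnorm (Vmat a s)⁻¹ (a s)) ^ 2
        ≤ #(Icc 1 t) * ∑ s ∈ Icc 1 t, wnorm (Vmat a s)⁻¹ (a s) ^ 2 := sq_sum_le_card_mul_sum_sq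
      _ ≤ t * (2 * d * Real.log (1 + (t : ℝ) / d)) := by
          rw [Nat.card_Icc, Nat.add_sub_cancel]; gcongr
      _ = 2 * d * t * Real.log (1 + (t : ℝ) / d) := by ring
  · have hlog : 0 ≤ (d : ℝ) * Real.log (1 + (t : ℝ) / d) :=
      mul_nonneg d.cast_nonneg (Real.log_nonneg (le_add_of_nonneg_right (by positivity)))
    unfold omrad
    gcongr 1 + Real.sqrt (_ + ?_)
    linarith [hdet (Nat.le_succ t)]

/-- **Elliptical potential lemma** (Lemma C.1): for any sequence of unit-norm-bounded
vectors `a_t` and `V_t := I + ∑_{s<t} a_s a_sᵀ`, the squared weighted norms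
`‖a_s‖²_{V_s⁻¹}` sum to at most `2 d log(1 + t/d)`, the weighted norms sum to at most
`√(2 d t log(1 + t/d))`, and `ω_t(δ) ≤ 1 + √(½ log((m+1)/δ) + (d/2) log(1 + t/d))`. -/
theorem elliptical_potential (d m : ℕ) (hd : 0 < d) (hm : 1 ≤ m)
    (a : ℕ → Fin d → ℝ) (ha : ∀ s, Real.sqrt (∑ i, a s i ^ 2) ≤ 1) (t : ℕ) :
    (∑ s ∈ Finset.Icc 1 t, (wnorm (Vmat a s)⁻¹ (a s)) ^ 2
        ≤ 2 * d * Real.log (1 + (t : ℝ) / d))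
    ∧ (∑ s ∈ Finset.Icc 1 t, wnorm (Vmat a s)⁻¹ (a s)
        ≤ Real.sqrt (2 * d * t * Real.log (1 + (t : ℝ) / d)))
    ∧ ∀ δ : ℝ, δ ∈ Set.Ioc (0 : ℝ) 1 →
        omrad m δ (Vmat a t)
          ≤ 1 + Real.sqrt ((1 / 2) * Real.log ((m + 1) / δ)
              + ((d : ℝ) / 2) * Real.log (1 + (t : ℝ) / d)) :=
  elliptical_potential_general d m a ha t
end

section
/- (Deterministic scaling bounds, Lemma 4.1/E.3) Let Φ*, Φ̂, Φ̃ ∈ ℝ^{m×d}, let V ∈ ℝ^{d×d} be positive definite, let ω ≥ 0, B ≥ 2, Γ > 0, α ∈ ℝ^m, and a_safe, b ∈ ℝ^d. Define M(a) := B ω ‖a‖_{V^{-1}} and 𝔞(ρ) := ρ b + (1−ρ) a_safe. Assume: (i) for every row i, ‖Φ̂ⁱ − Φ*ⁱ‖_V ≤ ω and ‖Φ̃ⁱ − Φ̂ⁱ‖_V ≤ (B−1)ω; (ii) Φ* a_safe ≤ α − Γ·1_m (componentwise); (iii) M(a_safe) ≤ Γ/3; (iv) Φ̃ b ≤ α.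 Then the set {ρ ∈ [0,1] : Φ̂ 𝔞(ρ) + ω‖𝔞(ρ)‖_{V^{-1}}·1_m ≤ α} is nonempty and contains its supremum ρ*, and: ρ* ≥ Γ/(Γ + 3M(b)), ρ* ≥ 2M(a_safe)/(2M(a_safe) + M(b)), and, writing a := 𝔞(ρ*), (1−ρ*)·M(a_safe) ≤ M(a), ρ*·M(b) ≤ 2M(a), and (1−ρ*)·Γ ≤ 6M(a). -/
/-!
Write `a(ρ) = ρ • b + (1 - ρ) • a_safe`. Cauchy–Schwarz for the dual norms `‖·‖_V`, `‖·‖_{V⁻¹}`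
turns (i), (ii), (iv) into the row bounds `Φ̂ⁱ b ≤ αᵢ + (B - 1) ω ‖b‖_{V⁻¹}` and
`Φ̂ⁱ a_safe ≤ αᵢ - Γ + ω ‖a_safe‖_{V⁻¹}`. With the triangle inequality for `‖a(ρ)‖_{V⁻¹}` and (iii),
every `ρ ≤ 2Γ / (2Γ + 3 M(b))` is feasible; both lower bounds on `ρ*` are weaker than this one.
The feasible set is closed, so `ρ*` is feasible, and if `ρ* < 1` some constraint is active at `ρ*`.
Bounding that constraint from above by the row bounds and the reverse triangle inequality
`ρ ‖b‖ ≤ ‖a(ρ)‖ + (1 - ρ) ‖a_safe‖` gives `(1 - ρ*) (Γ - M(a_safe)) ≤ M(a(ρ*))`, and the last three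
bounds follow from it and `M(a_safe) ≤ Γ / 3`.
-/

open scoped Matrix

open Matrix WithLp Set Filter Topology
open scoped MatrixOrder RealInnerProductSpace

section WeightedNorm

variable {d : ℕ} {A : Matrix (Fin d) (Fin d) ℝ}

lemma dotProduct_mulVec_eq_inner (hA : A.PosSemidef) (x y : Fin d → ℝ) :
    x ⬝ᵥ A *ᵥ y = ⟪toLp 2 (CFC.sqrt A *ᵥ x), toLp 2 (CFC.sqrt A *ᵥ y)⟫ := by
  have hsymm : (CFC.sqrt A)ᵀ = CFC.sqrt A := (CFC.sqrt_nonneg A).posSemidef.isHermitian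
  rw [EuclideanSpace.inner_toLp_toLp, star_trivial, dotProduct_mulVec (CFC.sqrt A *ᵥ y),
    ← mulVec_transpose, hsymm, mulVec_mulVec, CFC.sqrt_mul_sqrt_self A hA.nonneg, dotProduct_comm]

lemma wnorm_eq_norm (hA : A.PosSemidef) (v : Fin d → ℝ) :
    wnorm A v = ‖toLp 2 (CFC.sqrt A *ᵥ v)‖ := by
  rw [wnorm, dotProduct_mulVec_eq_inner hA, real_inner_self_eq_norm_sq,
    Real.sqrt_sq (norm_nonneg _)]

lemma wnorm_nonneg (A : Matrix (Fin d) (Fin d) ℝ) (v : Fin d → ℝ) : 0 ≤ wnorm A v :=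
  Real.sqrt_nonneg _

@[fun_prop]
lemma continuous_wnorm (A : Matrix (Fin d) (Fin d) ℝ) : Continuous (wnorm A) := by
  unfold wnorm
  fun_prop

lemma dotProduct_mulVec_le_wnorm_mul_wnorm (hA : A.PosSemidef) (x y : Fin d → ℝ) :
    x ⬝ᵥ A *ᵥ y ≤ wnorm A x * wnorm A y := by
  rw [dotProduct_mulVec_eq_inner hA, wnorm_eq_norm hA, wnorm_eq_norm hA]
  exact real_inner_le_norm _ _

lemma wnorm_add_le (hA : A.PosSemidef) (x y : Fin d → ℝ) :
    wnorm A (x + y) ≤ wnorm A x + wnorm A y := by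
  simp only [wnorm_eq_norm hA, mulVec_add, toLp_add]
  exact norm_add_le _ _

lemma wnorm_smul (A : Matrix (Fin d) (Fin d) ℝ) (c : ℝ) (x : Fin d → ℝ) :
    wnorm A (c • x) = |c| * wnorm A x := by
  rw [wnorm, wnorm, mulVec_smul, smul_dotProduct, dotProduct_smul, smul_eq_mul, smul_eq_mul,
    ← mul_assoc, ← sq, Real.sqrt_mul (sq_nonneg c), Real.sqrt_sq_eq_abs]

lemma wnorm_sub_comm (A : Matrix (Fin d) (Fin d) ℝ) (x y : Fin d → ℝ) :
    wnorm A (x - y) = wnorm A (y - x) := by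
  rw [← neg_sub, ← neg_one_smul ℝ (y - x), wnorm_smul, abs_neg, abs_one, one_mul]

lemma wnorm_convexComb_le (hA : A.PosSemidef) {ρ : ℝ} (hρ : ρ ∈ Icc 0 1) (x y : Fin d → ℝ) :
    wnorm A (ρ • x + (1 - ρ) • y) ≤ ρ * wnorm A x + (1 - ρ) * wnorm A y := by
  have h := wnorm_add_le hA (ρ • x) ((1 - ρ) • y)
  rwa [wnorm_smul, wnorm_smul, abs_of_nonneg hρ.1, abs_of_nonneg (sub_nonneg.2 hρ.2)] at h

lemma mul_wnorm_le_wnorm_convexComb_add (hA : A.PosSemidef) {ρ : ℝ} (hρ : ρ ≤ 1)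
    (x y : Fin d → ℝ) :
    ρ * wnorm A x ≤ wnorm A (ρ • x + (1 - ρ) • y) + (1 - ρ) * wnorm A y := by
  have h := wnorm_add_le hA (ρ • x + (1 - ρ) • y) ((ρ - 1) • y)
  rw [add_assoc, ← add_smul, sub_add_sub_cancel', sub_self, zero_smul, add_zero, wnorm_smul,
    wnorm_smul, abs_of_nonpos (sub_nonpos.2 hρ), neg_sub] at h
  exact (mul_le_mul_of_nonneg_right (le_abs_self ρ) (wnorm_nonneg A x)).trans h

lemma dotProduct_le_wnorm_mul_wnorm_inv {V : Matrix (Fin d) (Fin d) ℝ} (hV : V.PosDef)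
    (u x : Fin d → ℝ) : u ⬝ᵥ x ≤ wnorm V u * wnorm V⁻¹ x := by
  have hx : V *ᵥ (V⁻¹ *ᵥ x) = x := by
    rw [mulVec_mulVec, mul_nonsing_inv _ ((isUnit_iff_isUnit_det V).1 hV.isUnit), one_mulVec]
  calc u ⬝ᵥ x = u ⬝ᵥ V *ᵥ (V⁻¹ *ᵥ x) := by rw [hx]
    _ ≤ wnorm V u * wnorm V (V⁻¹ *ᵥ x) := dotProduct_mulVec_le_wnorm_mul_wnorm hV.posSemidef _ _
    _ = wnorm V u * wnorm V⁻¹ x := by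
      congr 1
      rw [wnorm, wnorm, hx, dotProduct_comm]

lemma dotProduct_le_add_of_wnorm_sub_le {V : Matrix (Fin d) (Fin d) ℝ} (hV : V.PosDef)
    {u w : Fin d → ℝ} {r : ℝ} (h : wnorm V (u - w) ≤ r) (x : Fin d → ℝ) :
    u ⬝ᵥ x ≤ w ⬝ᵥ x + r * wnorm V⁻¹ x := by
  have hcs := dotProduct_le_wnorm_mul_wnorm_inv hV (u - w) x
  rw [sub_dotProduct] at hcs
  nlinarith [wnorm_nonneg V⁻¹ x]

end WeightedNorm

def feasibleSet {ι : Type*} (f : ι → ℝ → ℝ) (c : ι → ℝ) : Set ℝ :=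
  {ρ | ρ ∈ Icc 0 1 ∧ ∀ i, f i ρ ≤ c i}

section FeasibleSet

variable {ι : Type*} {f : ι → ℝ → ℝ} {c : ι → ℝ}

lemma bddAbove_feasibleSet : BddAbove (feasibleSet f c) :=
  ⟨1, fun _ hρ => hρ.1.2⟩

lemma isClosed_feasibleSet (hf : ∀ i, Continuous (f i)) : IsClosed (feasibleSet f c) := by
  have : feasibleSet f c = Icc 0 1 ∩ ⋂ i, {ρ | f i ρ ≤ c i} := by
    ext; simp [feasibleSet]
  rw [this]
  exact isClosed_Icc.inter (isClosed_iInter fun i => isClosed_le (hf i) continuous_const)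

lemma csSup_mem_feasibleSet (hf : ∀ i, Continuous (f i)) (hne : (feasibleSet f c).Nonempty) :
    sSup (feasibleSet f c) ∈ feasibleSet f c :=
  (isClosed_feasibleSet hf).csSup_mem hne bddAbove_feasibleSet

/-- Otherwise all constraints would stay strict slightly to the right of the supremum. -/
lemma exists_le_apply_csSup_feasibleSet [Finite ι] (hf : ∀ i, Continuous (f i))
    (hlt : sSup (feasibleSet f c) < 1) : ∃ i, c i ≤ f i (sSup (feasibleSet f c)) := by
  set ρ₀ := sSup (feasibleSet f c)
  by_contra! hstrict
  have hnear : ∀ᶠ ρ in 𝓝[>] ρ₀, ρ ∈ feasibleSet f c := by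
    have hall : ∀ᶠ ρ in 𝓝 ρ₀, ρ < 1 ∧ ∀ i, f i ρ < c i :=
      (eventually_lt_nhds hlt).and <| eventually_all.2 fun i =>
        (hf i).continuousAt.eventually_lt continuousAt_const (hstrict i)
    filter_upwards [nhdsWithin_le_nhds hall, self_mem_nhdsWithin] with ρ ⟨hρ1, hρc⟩ hρ
    exact ⟨⟨(Real.sSup_nonneg fun _ h => h.1.1).trans hρ.le, hρ1.le⟩, fun i => (hρc i).le⟩
  obtain ⟨ρ, hρ, hgt⟩ := (hnear.and self_mem_nhdsWithin).exists
  exact (le_csSup bddAbove_feasibleSet hρ).not_gt hgt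

end FeasibleSet

lemma div_add_le_div_add {s t m : ℝ} (hs : 0 ≤ s) (hst : s ≤ t) (hm : 0 ≤ m) :
    s / (s + m) ≤ t / (t + m) := by
  rcases (add_nonneg hs hm).eq_or_lt with h | h
  · rw [← h, div_zero]
    exact div_nonneg (hs.trans hst) (by linarith)
  · rw [div_le_div_iff₀ h (by linarith)]
    nlinarith

lemma two_mul_div_two_mul_add_le {s t Γ : ℝ} (hs : 0 ≤ s) (hsΓ : s ≤ Γ / 3) (ht : 0 ≤ t) :
    2 * s / (2 * s + t) ≤ 2 * Γ / (2 * Γ + 3 * t) := by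
  rw [← mul_div_mul_left _ _ three_ne_zero, mul_add]
  exact div_add_le_div_add (by positivity) (by linarith) (by positivity)

lemma scaling_bounds_of_active_constraint {ρ Γ k s t a : ℝ} (hρ : ρ ≤ 1) (hk : 0 ≤ k)
    (hs : 0 ≤ s) (hsΓ : k * s ≤ Γ / 3) (hact : (1 - ρ) * (Γ - k * s) ≤ k * a)
    (hrev : ρ * t ≤ a + (1 - ρ) * s) :
    (1 - ρ) * (k * s) ≤ k * a ∧ ρ * (k * t) ≤ 2 * (k * a) ∧ (1 - ρ) * Γ ≤ 6 * (k * a) := by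
  have hs1 : 0 ≤ (1 - ρ) * (k * s) := mul_nonneg (sub_nonneg.2 hρ) (mul_nonneg hk hs)
  have h2s : (1 - ρ) * (2 * (k * s)) ≤ k * a :=
    (mul_le_mul_of_nonneg_left (by linarith) (sub_nonneg.2 hρ)).trans hact
  have hrev' : ρ * (k * t) ≤ k * a + (1 - ρ) * (k * s) := by
    nlinarith [mul_le_mul_of_nonneg_left hrev hk]
  exact ⟨by linarith, by linarith, by linarith⟩

section ConvexCombination

variable {d : ℕ} {W : Matrix (Fin d) (Fin d) ℝ} {u x y : Fin d → ℝ} {c ω B Γ ρ : ℝ}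

lemma dotProduct_convexComb (u x y : Fin d → ℝ) (ρ : ℝ) :
    u ⬝ᵥ (ρ • x + (1 - ρ) • y) = ρ * (u ⬝ᵥ x) + (1 - ρ) * (u ⬝ᵥ y) := by
  rw [dotProduct_add, dotProduct_smul, dotProduct_smul, smul_eq_mul, smul_eq_mul]

lemma dotProduct_add_wnorm_convexComb_le (hW : W.PosSemidef) (hω : 0 ≤ ω) (hB : 2 ≤ B)
    (hΓ : 0 < Γ) (hy : B * ω * wnorm W y ≤ Γ / 3)
    (hux : u ⬝ᵥ x ≤ c + (B - 1) * ω * wnorm W x) (huy : u ⬝ᵥ y ≤ c - Γ + ω * wnorm W y)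
    (hρ : ρ ∈ Icc 0 (2 * Γ / (2 * Γ + 3 * (B * ω * wnorm W x)))) :
    u ⬝ᵥ (ρ • x + (1 - ρ) • y) + ω * wnorm W (ρ • x + (1 - ρ) • y) ≤ c := by
  have hMx : 0 ≤ B * ω * wnorm W x := mul_nonneg (by positivity) (wnorm_nonneg W x)
  have hMy : 0 ≤ ω * wnorm W y := mul_nonneg hω (wnorm_nonneg W y)
  have hρ' : ρ * (2 * Γ + 3 * (B * ω * wnorm W x)) ≤ 2 * Γ :=
    (le_div_iff₀ (by positivity)).1 hρ.2
  have hρ1 : ρ ≤ 1 := by nlinarith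
  rw [dotProduct_convexComb]
  nlinarith [mul_le_mul_of_nonneg_left hux hρ.1, mul_le_mul_of_nonneg_left huy (sub_nonneg.2 hρ1),
    mul_le_mul_of_nonneg_left (wnorm_convexComb_le hW ⟨hρ.1, hρ1⟩ x y) hω,
    mul_nonneg (sub_nonneg.2 hρ1) (mul_nonneg (sub_nonneg.2 hB) hMy)]

lemma mul_sub_le_of_le_dotProduct_add_wnorm_convexComb (hW : W.PosSemidef) (hω : 0 ≤ ω)
    (hB : 1 ≤ B) (hux : u ⬝ᵥ x ≤ c + (B - 1) * ω * wnorm W x)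
    (huy : u ⬝ᵥ y ≤ c - Γ + ω * wnorm W y) (hρ : ρ ∈ Icc 0 1)
    (hact : c ≤ u ⬝ᵥ (ρ • x + (1 - ρ) • y) + ω * wnorm W (ρ • x + (1 - ρ) • y)) :
    (1 - ρ) * (Γ - B * ω * wnorm W y) ≤ B * ω * wnorm W (ρ • x + (1 - ρ) • y) := by
  rw [dotProduct_convexComb] at hact
  nlinarith [mul_le_mul_of_nonneg_left hux hρ.1, mul_le_mul_of_nonneg_left huy (sub_nonneg.2 hρ.2),
    mul_le_mul_of_nonneg_left (mul_wnorm_le_wnorm_convexComb_add hW hρ.2 x y)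
      (mul_nonneg (sub_nonneg.2 hB) hω)]

end ConvexCombination

/-- **Deterministic scaling bounds (Lemma 4.1/E.3).** With `M(a) := Bω‖a‖_{V⁻¹}` and
`𝔞(ρ) := ρb + (1−ρ)a_safe`, under the row-wise consistency bounds (i), the safety margin
(ii), the smallness condition (iii) and the perturbed feasibility (iv), the set
`{ρ ∈ [0,1] : Φ̂𝔞(ρ) + ω‖𝔞(ρ)‖_{V⁻¹}·1 ≤ α}` is nonempty, contains its supremum `ρ*`, and
`ρ* ≥ Γ/(Γ+3M(b))`, `ρ* ≥ 2M(a_safe)/(2M(a_safe)+M(b))`, `(1−ρ*)M(a_safe) ≤ M(𝔞(ρ*))`,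
`ρ*·M(b) ≤ 2M(𝔞(ρ*))`, and `(1−ρ*)·Γ ≤ 6M(𝔞(ρ*))`. -/
theorem scaling_bounds (d m : ℕ)
    (Φs Φh Φt : Fin m → Fin d → ℝ)
    (V : Matrix (Fin d) (Fin d) ℝ) (hV : V.PosDef)
    (ω B Γ : ℝ) (hω : 0 ≤ ω) (hB : 2 ≤ B) (hΓ : 0 < Γ)
    (α : Fin m → ℝ) (asafe b : Fin d → ℝ)
    (M : (Fin d → ℝ) → ℝ) (hM : ∀ x, M x = B * ω * wnorm V⁻¹ x)
    (afrak : ℝ → Fin d → ℝ)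
    (hafrak : ∀ ρ, afrak ρ = fun j => ρ * b j + (1 - ρ) * asafe j)
    (h1 : ∀ i, wnorm V (fun j => Φh i j - Φs i j) ≤ ω
        ∧ wnorm V (fun j => Φt i j - Φh i j) ≤ (B - 1) * ω)
    (h2 : ∀ i, Φs i ⬝ᵥ asafe ≤ α i - Γ)
    (h3 : M asafe ≤ Γ / 3)
    (h4 : ∀ i, Φt i ⬝ᵥ b ≤ α i)
    (S : Set ℝ)
    (hS : S = {ρ | ρ ∈ Set.Icc (0 : ℝ) 1
        ∧ ∀ i, Φh i ⬝ᵥ afrak ρ + ω * wnorm V⁻¹ (afrak ρ) ≤ α i}) :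
    S.Nonempty ∧ sSup S ∈ S
    ∧ Γ / (Γ + 3 * M b) ≤ sSup S
    ∧ 2 * M asafe / (2 * M asafe + M b) ≤ sSup S
    ∧ (1 - sSup S) * M asafe ≤ M (afrak (sSup S))
    ∧ sSup S * M b ≤ 2 * M (afrak (sSup S))
    ∧ (1 - sSup S) * Γ ≤ 6 * M (afrak (sSup S)) := by
  obtain rfl : M = fun x => B * ω * wnorm V⁻¹ x := funext hM
  obtain rfl : afrak = fun ρ => ρ • b + (1 - ρ) • asafe := funext hafrak
  set g : Fin m → ℝ → ℝ := fun i ρ =>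
    Φh i ⬝ᵥ (ρ • b + (1 - ρ) • asafe) + ω * wnorm V⁻¹ (ρ • b + (1 - ρ) • asafe)
  obtain rfl : S = feasibleSet g α := hS
  have hW : V⁻¹.PosSemidef := hV.inv.posSemidef
  have hMnonneg : ∀ x, 0 ≤ B * ω * wnorm V⁻¹ x := fun x =>
    mul_nonneg (by positivity) (wnorm_nonneg _ _)
  have hb : ∀ i, Φh i ⬝ᵥ b ≤ α i + (B - 1) * ω * wnorm V⁻¹ b := fun i =>
    (dotProduct_le_add_of_wnorm_sub_le hV ((wnorm_sub_comm _ _ _).trans_le (h1 i).2) b).trans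
      (by linarith [h4 i])
  have hs : ∀ i, Φh i ⬝ᵥ asafe ≤ α i - Γ + ω * wnorm V⁻¹ asafe := fun i =>
    (dotProduct_le_add_of_wnorm_sub_le hV (h1 i).1 asafe).trans (by linarith [h2 i])
  set ρ₀ := 2 * Γ / (2 * Γ + 3 * (B * ω * wnorm V⁻¹ b))
  have hρ₀ : ρ₀ ∈ Icc 0 1 := by
    have := hMnonneg b
    exact ⟨by positivity, div_le_one_of_le₀ (by linarith) (by positivity)⟩
  have hfeas : ∀ ρ ∈ Icc 0 ρ₀, ρ ∈ feasibleSet g α := fun ρ hρ =>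
    ⟨⟨hρ.1, hρ.2.trans hρ₀.2⟩, fun i =>
      dotProduct_add_wnorm_convexComb_le hW hω hB hΓ h3 (hb i) (hs i) hρ⟩
  have hg : ∀ i, Continuous (g i) := fun i => by fun_prop
  have hmem := csSup_mem_feasibleSet hg ⟨0, hfeas 0 ⟨le_rfl, hρ₀.1⟩⟩
  set ρ := sSup (feasibleSet g α)
  have hρ₀le : ρ₀ ≤ ρ := le_csSup bddAbove_feasibleSet (hfeas ρ₀ ⟨hρ₀.1, le_rfl⟩)
  have hact : (1 - ρ) * (Γ - B * ω * wnorm V⁻¹ asafe)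
      ≤ B * ω * wnorm V⁻¹ (ρ • b + (1 - ρ) • asafe) := by
    rcases hmem.1.2.eq_or_lt with hρ1 | hρ1
    · rw [hρ1, sub_self, zero_mul]
      exact hMnonneg _
    · obtain ⟨i, hi⟩ := exists_le_apply_csSup_feasibleSet hg hρ1
      exact mul_sub_le_of_le_dotProduct_add_wnorm_convexComb hW hω (by linarith) (hb i) (hs i)
        hmem.1 hi
  exact ⟨⟨0, hfeas 0 ⟨le_rfl, hρ₀.1⟩⟩, hmem,
    (div_add_le_div_add hΓ.le (by linarith) (by linarith [hMnonneg b])).trans hρ₀le,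
    (two_mul_div_two_mul_add_le (hMnonneg asafe) h3 (hMnonneg b)).trans hρ₀le,
    scaling_bounds_of_active_constraint hmem.1.2 (by positivity) (wnorm_nonneg _ _) h3 hact
      (mul_wnorm_le_wnorm_convexComb_add hW hmem.1.2 b asafe)⟩
end

section
/- (Lemma E.2, bound on forced plays of the safe action) Fix a ∈ ℝ^d with ‖a‖ ≤ 1, let {a_s} be any sequence of vectors in ℝ^d, V_t := I + Σ_{s<t}a_s a_sᵀ, and n_t := #{s < t : a_s = a}. Then ‖a‖²_{V_t^{-1}} ≤ ‖a‖²/(1 + n_t‖a‖²), and in particular ‖a‖²_{V_t^{-1}} ≤ 1/n_t whenever n_t ≥ 1. Consequently, when S-COLTS is run with any Γ0 > 0 and B-concentrated μ, for every horizon T the number of rounds t ≤ T at which S-COLTS plays a_safe because M_t(a_safe) > Γ0/3 is at most 9·ω_T(δ)²·B_T²/Γ0² + 1. -/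
open Finset
open scoped Matrix

/-- Number of rounds `s < t` at which the sequence `acts` equals `a`. -/
noncomputable def playCount {d : ℕ} (acts : ℕ → Fin d → ℝ) (a : Fin d → ℝ) (t : ℕ) : ℕ :=
  ((Finset.Ico 1 t).filter fun s => acts s = a).card

/-! With `x := V⁻¹ a` one has `aᵀV⁻¹a = xᵀVx ≥ ‖x‖² + n (aᵀx)²`, because each of the `n` past
plays of `a` contributes `(aᵀx)²` to `xᵀVx`; together with Cauchy–Schwarz `(aᵀx)² ≤ ‖x‖²‖a‖²`
this forces `aᵀV⁻¹a ≤ ‖a‖²/(1 + n‖a‖²)`. For the count, every forced round before the last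
forced round `t₀ ≤ T` is a play of `a_safe`, so there are at most `n_{t₀} + 1` forced rounds, while
`Γ0/3 < M_{t₀}(a_safe) ≤ B_T ω_T ‖a_safe‖_{V_{t₀}⁻¹} ≤ B_T ω_T / √n_{t₀}`. -/

open Matrix

section QuadraticForm

variable {n : Type*} [Fintype n]

lemma dotProduct_self_nonneg (x : n → ℝ) : 0 ≤ x ⬝ᵥ x := by
  simpa using dotProduct_star_self_nonneg x

lemma sq_dotProduct_le (a x : n → ℝ) : (a ⬝ᵥ x) ^ 2 ≤ (x ⬝ᵥ x) * (a ⬝ᵥ a) := by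
  simpa only [dotProduct, ← sq, mul_comm] using Finset.sum_mul_sq_le_sq_mul_sq univ a x

variable [DecidableEq n]

lemma isUnit_of_dotProduct_self_le {V : Matrix n n ℝ} (hV : ∀ x, x ⬝ᵥ x ≤ x ⬝ᵥ V *ᵥ x) :
    IsUnit V := by
  rw [← mulVec_injective_iff_isUnit]
  intro x y hxy
  have h := hV (x - y)
  rw [mulVec_sub, hxy, sub_self, dotProduct_zero] at h
  exact sub_eq_zero.mp (dotProduct_self_eq_zero.mp (h.antisymm (dotProduct_self_nonneg _)))

lemma le_div_one_add_mul_of_add_mul_sq_le {q u s c : ℝ} (hc : 0 ≤ c) (hs : 0 ≤ s)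
    (hq : u + c * q ^ 2 ≤ q) (hCS : q ^ 2 ≤ u * s) : q ≤ s / (1 + c * s) := by
  have hcs : 0 ≤ 1 + c * s := by positivity
  have key : q * (q * (1 + c * s) - s) ≤ 0 := by nlinarith [mul_le_mul_of_nonneg_left hq hs]
  rw [le_div_iff₀ (by positivity)]
  nlinarith [mul_le_mul_of_nonneg_left key hcs]

lemma dotProduct_inv_mulVec_le {V : Matrix n n ℝ} {a : n → ℝ} {c : ℝ} (hc : 0 ≤ c)
    (hV : ∀ x, x ⬝ᵥ x + c * (a ⬝ᵥ x) ^ 2 ≤ x ⬝ᵥ V *ᵥ x) :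
    0 ≤ a ⬝ᵥ V⁻¹ *ᵥ a ∧ a ⬝ᵥ V⁻¹ *ᵥ a ≤ a ⬝ᵥ a / (1 + c * (a ⬝ᵥ a)) := by
  have hunit : IsUnit V.det := (isUnit_iff_isUnit_det V).mp <|
    isUnit_of_dotProduct_self_le fun x => le_of_add_le_of_nonneg_left (hV x) (by positivity)
  set x := V⁻¹ *ᵥ a
  have hx : x ⬝ᵥ x + c * (a ⬝ᵥ x) ^ 2 ≤ a ⬝ᵥ x := by
    simpa only [x, mulVec_mulVec, mul_nonsing_inv _ hunit, one_mulVec, dotProduct_comm]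
      using hV x
  refine ⟨?_, le_div_one_add_mul_of_add_mul_sq_le hc (dotProduct_self_nonneg a) hx
    (sq_dotProduct_le a x)⟩
  nlinarith [dotProduct_self_nonneg x, sq_nonneg (a ⬝ᵥ x)]

end QuadraticForm

section Vmat

variable {d : ℕ}

lemma dotProduct_Vmat_mulVec (acts : ℕ → Fin d → ℝ) (t : ℕ) (x : Fin d → ℝ) :
    x ⬝ᵥ Vmat acts t *ᵥ x = x ⬝ᵥ x + ∑ s ∈ Ico 1 t, (acts s ⬝ᵥ x) ^ 2 := by
  simp only [Vmat, add_mulVec, one_mulVec, dotProduct_add, sum_mulVec, dotProduct_sum,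
    vecMulVec_mulVec, op_smul_eq_smul, dotProduct_smul, smul_eq_mul, sq]
  congr 1
  exact sum_congr rfl fun s _ => by rw [dotProduct_comm x]

lemma playCount_mul_sq_le_sum (acts : ℕ → Fin d → ℝ) (a x : Fin d → ℝ) (t : ℕ) :
    playCount acts a t * (a ⬝ᵥ x) ^ 2 ≤ ∑ s ∈ Ico 1 t, (acts s ⬝ᵥ x) ^ 2 :=
  calc (playCount acts a t : ℝ) * (a ⬝ᵥ x) ^ 2
      = ∑ s ∈ (Ico 1 t).filter (acts · = a), (acts s ⬝ᵥ x) ^ 2 := by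
        rw [sum_congr rfl fun s hs => by rw [(mem_filter.mp hs).2], sum_const, nsmul_eq_mul,
          playCount]
    _ ≤ ∑ s ∈ Ico 1 t, (acts s ⬝ᵥ x) ^ 2 :=
        sum_le_sum_of_subset_of_nonneg (filter_subset _ _) fun _ _ _ => sq_nonneg _

lemma wnorm_Vmat_inv_sq_le (acts : ℕ → Fin d → ℝ) (a : Fin d → ℝ) (t : ℕ) :
    wnorm (Vmat acts t)⁻¹ a ^ 2 ≤ a ⬝ᵥ a / (1 + playCount acts a t * (a ⬝ᵥ a)) := by
  obtain ⟨hnonneg, hle⟩ := dotProduct_inv_mulVec_le (V := Vmat acts t) (a := a)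
    (Nat.cast_nonneg (playCount acts a t)) fun x => by
      rw [dotProduct_Vmat_mulVec]
      gcongr
      exact playCount_mul_sq_le_sum acts a x t
  rwa [wnorm, Real.sq_sqrt hnonneg]

lemma playCount_mul_wnorm_Vmat_inv_sq_le_one (acts : ℕ → Fin d → ℝ) (a : Fin d → ℝ) (t : ℕ) :
    playCount acts a t * wnorm (Vmat acts t)⁻¹ a ^ 2 ≤ 1 := by
  have hs := dotProduct_self_nonneg a
  have hn : (0 : ℝ) ≤ playCount acts a t := Nat.cast_nonneg _
  calc (playCount acts a t : ℝ) * wnorm (Vmat acts t)⁻¹ a ^ 2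
      ≤ playCount acts a t * (a ⬝ᵥ a / (1 + playCount acts a t * (a ⬝ᵥ a))) :=
        mul_le_mul_of_nonneg_left (wnorm_Vmat_inv_sq_le acts a t) hn
    _ ≤ 1 := by
        rw [← mul_div_assoc, div_le_one (by positivity)]
        linarith

end Vmat

lemma card_le_playCount_max'_add_one {d : ℕ} {acts : ℕ → Fin d → ℝ} {a : Fin d → ℝ}
    {S : Finset ℕ} (hS : S.Nonempty) (hpos : ∀ t ∈ S, 1 ≤ t) (hplay : ∀ t ∈ S, acts t = a) :
    S.card ≤ playCount acts a (S.max' hS) + 1 := by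
  have hsub : S.erase (S.max' hS) ⊆ (Ico 1 (S.max' hS)).filter (acts · = a) := fun t ht => by
    obtain ⟨hne, htS⟩ := mem_erase.mp ht
    exact mem_filter.mpr
      ⟨mem_Ico.mpr ⟨hpos t htS, (S.le_max' t htS).lt_of_ne hne⟩, hplay t htS⟩
  have := card_le_card hsub
  rw [card_erase_of_mem (S.max'_mem hS)] at this
  rw [playCount]
  omega

lemma le_sq_div_sq_of_lt_mul {n w c C Γ : ℝ} (hΓ : 0 < Γ) (hw : 0 ≤ w) (hcC : c ≤ C)
    (hlt : Γ < c * w) (hn : n * w ^ 2 ≤ 1) (hn₀ : 0 ≤ n) : n ≤ C ^ 2 / Γ ^ 2 := by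
  have hΓC : Γ ^ 2 ≤ (C * w) ^ 2 :=
    pow_le_pow_left₀ hΓ.le (hlt.le.trans (mul_le_mul_of_nonneg_right hcC hw)) 2
  rw [le_div_iff₀ (by positivity)]
  calc n * Γ ^ 2 ≤ n * (C * w) ^ 2 := mul_le_mul_of_nonneg_left hΓC hn₀
    _ = C ^ 2 * (n * w ^ 2) := by ring
    _ ≤ C ^ 2 := mul_le_of_le_one_right (sq_nonneg C) hn

theorem forced_safe_plays_general (d : ℕ)
    (asafe : Fin d → ℝ)
    (acts : ℕ → Fin d → ℝ)
    (Γ0 : ℝ) (hΓ0 : 0 < Γ0)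
    (Bt : ℕ → ℝ)
    (ωt : ℕ → ℝ)
    (hmono : ∀ s t : ℕ, s ≤ t → Bt s * ωt s ≤ Bt t * ωt t)
    (M : ℕ → (Fin d → ℝ) → ℝ)
    (hM : ∀ t x, M t x = Bt t * ωt t * wnorm (Vmat acts t)⁻¹ x)
    (halg : ∀ t, 1 ≤ t → Γ0 / 3 < M t asafe → acts t = asafe) :
    (∀ (a : Fin d → ℝ), Real.sqrt (∑ i, a i ^ 2) ≤ 1 → ∀ (acts' : ℕ → Fin d → ℝ) (t : ℕ),
        (wnorm (Vmat acts' t)⁻¹ a) ^ 2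
            ≤ (∑ i, a i ^ 2) / (1 + playCount acts' a t * ∑ i, a i ^ 2)
        ∧ (1 ≤ playCount acts' a t →
            (wnorm (Vmat acts' t)⁻¹ a) ^ 2 ≤ 1 / playCount acts' a t))
    ∧ ∀ T : ℕ,
        (((Finset.Icc 1 T).filter fun t => Γ0 / 3 < M t asafe).card : ℝ)
          ≤ 9 * (ωt T) ^ 2 * (Bt T) ^ 2 / Γ0 ^ 2 + 1 := by
  refine ⟨fun a _ acts' t => ⟨?_, fun hn => ?_⟩, fun T => ?_⟩
  · simpa only [dotProduct, sq] using wnorm_Vmat_inv_sq_le acts' a t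
  · exact (le_div_iff₀' (by exact_mod_cast hn)).mpr
      (playCount_mul_wnorm_Vmat_inv_sq_le_one acts' a t)
  set S := (Icc 1 T).filter fun t => Γ0 / 3 < M t asafe
  rcases S.eq_empty_or_nonempty with hS | hS
  · rw [hS, card_empty, Nat.cast_zero]
    positivity
  obtain ⟨ht₀, hforced⟩ := mem_filter.mp (S.max'_mem hS)
  have hcard := card_le_playCount_max'_add_one hS
    (fun t ht => (mem_Icc.mp (mem_filter.mp ht).1).1)
    (fun t ht => halg t (mem_Icc.mp (mem_filter.mp ht).1).1 (mem_filter.mp ht).2)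
  rw [hM] at hforced
  have hcount := le_sq_div_sq_of_lt_mul (by positivity) (Real.sqrt_nonneg _)
    (hmono _ T (mem_Icc.mp ht₀).2) hforced
    (playCount_mul_wnorm_Vmat_inv_sq_le_one acts asafe _) (Nat.cast_nonneg _)
  calc (S.card : ℝ) ≤ playCount acts asafe (S.max' hS) + 1 := by exact_mod_cast hcard
    _ ≤ (Bt T * ωt T) ^ 2 / (Γ0 / 3) ^ 2 + 1 := by gcongr
    _ = 9 * ωt T ^ 2 * Bt T ^ 2 / Γ0 ^ 2 + 1 := by ring

/-- **Lemma E.2 (bound on forced plays of the safe action).** For any vector `a` with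
`‖a‖ ≤ 1`, any sequence `{a_s}`, and `n_t := #{s < t : a_s = a}`, one has
`‖a‖²_{V_t⁻¹} ≤ ‖a‖²/(1 + n_t‖a‖²)`, hence `‖a‖²_{V_t⁻¹} ≤ 1/n_t` when `n_t ≥ 1`.
Consequently, if S-COLTS (which plays `a_safe` at every round where `M_t(a_safe) > Γ0/3`,
with `M_t(x) = B_t ω_t(δ) ‖x‖_{V_t⁻¹}`, `B_t = 1 + max(1, B(δ/(t(t+1))))`, and `B_t ω_t(δ)`
nondecreasing in `t`) is run with any `Γ0 > 0` and a `B`-concentrated law `μ`, then for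
every horizon `T` the number of rounds `t ≤ T` at which it plays `a_safe` because
`M_t(a_safe) > Γ0/3` is at most `9 ω_T(δ)² B_T²/Γ0² + 1`. -/
theorem forced_safe_plays (d m : ℕ)
    (asafe : Fin d → ℝ) (hasafe : Real.sqrt (∑ i, asafe i ^ 2) ≤ 1)
    (acts : ℕ → Fin d → ℝ)
    (δ Γ0 : ℝ) (hδ : δ ∈ Set.Ioc (0 : ℝ) 1) (hΓ0 : 0 < Γ0)
    (Bfun : ℝ → ℝ) (hBfun : ∀ ξ, 0 ≤ Bfun ξ)
    (Bt : ℕ → ℝ) (hBt : ∀ t, Bt t = 1 + max 1 (Bfun (δ / (t * (t + 1)))))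
    (ωt : ℕ → ℝ) (hωt : ∀ t, ωt t = omrad m δ (Vmat acts t))
    (hmono : ∀ s t : ℕ, s ≤ t → Bt s * ωt s ≤ Bt t * ωt t)
    (M : ℕ → (Fin d → ℝ) → ℝ)
    (hM : ∀ t x, M t x = Bt t * ωt t * wnorm (Vmat acts t)⁻¹ x)
    (halg : ∀ t, 1 ≤ t → Γ0 / 3 < M t asafe → acts t = asafe) :
    (∀ (a : Fin d → ℝ), Real.sqrt (∑ i, a i ^ 2) ≤ 1 → ∀ (acts' : ℕ → Fin d → ℝ) (t : ℕ),
        (wnorm (Vmat acts' t)⁻¹ a) ^ 2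
            ≤ (∑ i, a i ^ 2) / (1 + playCount acts' a t * ∑ i, a i ^ 2)
        ∧ (1 ≤ playCount acts' a t →
            (wnorm (Vmat acts' t)⁻¹ a) ^ 2 ≤ 1 / playCount acts' a t))
    ∧ ∀ T : ℕ,
        (((Finset.Icc 1 T).filter fun t => Γ0 / 3 < M t asafe).card : ℝ)
          ≤ 9 * (ωt T) ^ 2 * (Bt T) ^ 2 / Γ0 ^ 2 + 1 :=
  forced_safe_plays_general d asafe acts Γ0 hΓ0 Bt ωt hmono M hM halg
end

section
/- (Lemma E.5, generic look-back run-length accumulation) Let χ ∈ (0,1] and δ ∈ (0,1). Let {G_i}_{i≥0} be a filtration, {X_i} a [0,1]-valued process with each X_i G_i-measurable, and {L_i} a process of integers ≥ 1 with each L_i G_{i+1}-measurable and satisfying P(L_i > 1 + k | G_i) ≤ (1 − χ/2)^k for every integer k ≥ 0. Then with probability at least 1 − δ, for all n: Σ_{i≤n} L_i X_i ≤ (5/χ)·( Σ_{i≤n} X_i + log(1/δ) ). -/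
open MeasureTheory Finset
open scoped ENNReal

/-!
Put `λ = χ/5`. For `X ∈ [0,1]` convexity gives `exp (λ L X) ≤ 1 - X + X e^{λL}`, and writing
`e^{λL} = e^λ + ∑_k (e^λ - 1) e^{λ(k+1)} 1{1 + k < L}`, the geometric tail bound yields
`E[e^{λ L_i} | G_i] ≤ e^λ + (e^λ - 1) e^λ / (1 - e^λ (1 - χ/2)) ≤ 2`. Hence
`E[exp (λ L_i X_i) | G_i] ≤ 1 + X_i ≤ e^{X_i}`, i.e. `M_n = ∏_{i<n} exp (λ L_i X_i - X_i)` is a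
nonnegative supermartingale with `M_0 = 1`. By Ville's maximal inequality `M_n` ever reaches `1/δ`
with probability at most `δ`, and off that event taking logarithms gives, for every `n`,
`λ ∑_{i≤n} L_i X_i < ∑_{i≤n} X_i + log (1/δ)`.
-/

namespace Real

theorem exp_mul_one_sub_lt_one {x a : ℝ} (h : x < a) : exp x * (1 - a) < 1 :=
  calc exp x * (1 - a) ≤ exp x * exp (-a) := by
        gcongr; linarith [add_one_le_exp (-a)]
    _ = exp (x - a) := by rw [← exp_add, sub_eq_add_neg]
    _ < 1 := exp_lt_one_iff.2 (by linarith)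

theorem exp_le_cubic {x : ℝ} (h0 : 0 ≤ x) (h1 : x ≤ 1) :
    exp x ≤ 1 + x + x ^ 2 / 2 + 2 / 9 * x ^ 3 := by
  have := exp_bound' h0 h1 (n := 3) (by norm_num)
  norm_num [Finset.sum_range_succ, Nat.factorial] at this
  linarith

theorem exp_div_five_add_div_le_two {χ : ℝ} (h0 : 0 < χ) (h1 : χ ≤ 1) :
    exp (χ / 5) + (exp (χ / 5) - 1) * exp (χ / 5) / (1 - exp (χ / 5) * (1 - χ / 2)) ≤ 2 := by
  set l := χ / 5
  set r := exp (χ / 5)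
  have hl0 : 0 < l := by positivity
  have hl1 : l ≤ 1 / 5 := by simp only [l]; linarith
  have hq : χ / 2 = 5 * l / 2 := by ring
  rw [hq]
  have hub : r ≤ 1 + l + l ^ 2 / 2 + 2 / 9 * l ^ 3 := exp_le_cubic hl0.le (by linarith)
  have hlb : 1 + l ≤ r := by linarith [add_one_le_exp l]
  have hden : 3 / 2 * l + 2 * l ^ 2 ≤ 1 - r * (1 - 5 * l / 2) := by nlinarith
  have hdenpos : 0 < 1 - r * (1 - 5 * l / 2) := by nlinarith
  have key : (r - 1) * r ≤ (2 - r) * (1 - r * (1 - 5 * l / 2)) := by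
    nlinarith [mul_le_mul_of_nonneg_left hden (by nlinarith : (0:ℝ) ≤ 2 - r)]
  rw [← le_sub_iff_add_le', div_le_iff₀ hdenpos]
  linarith

theorem exp_mul_le_one_sub_add_mul_exp {x : ℝ} (hx : x ∈ Set.Icc (0 : ℝ) 1) (z : ℝ) :
    exp (x * z) ≤ 1 - x + x * exp z := by
  have h := convexOn_exp.2 (Set.mem_univ 0) (Set.mem_univ z) (sub_nonneg.2 hx.2) hx.1
    (sub_add_cancel 1 x)
  simpa only [smul_eq_mul, mul_zero, zero_add, exp_zero, mul_one] using h

theorem exp_neg_mul_one_add_le_one (x : ℝ) : exp (-x) * (1 + x) ≤ 1 := by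
  rw [exp_neg, inv_mul_le_iff₀ (exp_pos x), mul_one, add_comm]
  exact add_one_le_exp x

end Real

theorem pow_le_add_sum_range_pred {r : ℝ} (hr : 1 ≤ r) :
    ∀ n : ℕ, r ^ n ≤ r + ∑ k ∈ range (n - 1), (r - 1) * r ^ (k + 1)
  | 0 => by simpa using hr
  | n + 1 => by
    have hterm : ∀ k ∈ range n, (r - 1) * r ^ (k + 1) = r ^ (k + 1 + 1) - r ^ (k + 1) :=
      fun k _ => by ring
    rw [Nat.add_sub_cancel, sum_congr rfl hterm, sum_range_sub (fun k => r ^ (k + 1)) n]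
    simp

theorem ENNReal.mul_ofReal_pow_le_add_tsum {r : ℝ} (hr : 1 ≤ r) (n : ℕ) (x : ℝ≥0∞) :
    x * ENNReal.ofReal (r ^ n) ≤ ENNReal.ofReal r * x +
      ∑' k : ℕ, ENNReal.ofReal ((r - 1) * r ^ (k + 1)) * (if 1 + k < n then x else 0) := by
  have hterm : ∀ k : ℕ, 0 ≤ (r - 1) * r ^ (k + 1) := fun k =>
    mul_nonneg (by linarith) (pow_nonneg (by linarith) _)
  have hsum : (∑' k : ℕ, ENNReal.ofReal ((r - 1) * r ^ (k + 1)) * (if 1 + k < n then x else 0))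
      = ENNReal.ofReal (∑ k ∈ range (n - 1), (r - 1) * r ^ (k + 1)) * x := by
    rw [tsum_eq_sum (s := range (n - 1)) fun k hk => by
        rw [if_neg (by simp only [mem_range, not_lt] at hk; omega), mul_zero],
      ENNReal.ofReal_sum_of_nonneg fun k _ => hterm k, Finset.sum_mul]
    exact Finset.sum_congr rfl fun k hk => by
      rw [if_pos (by simp only [mem_range] at hk; omega)]
  rw [hsum, mul_comm x, ← add_mul, ← ENNReal.ofReal_add (by linarith)
    (Finset.sum_nonneg fun k _ => hterm k)]
  gcongr
  exact pow_le_add_sum_range_pred hr n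

theorem Finset.sum_mul_le_of_prod_exp_lt {ι : Type*} (s : Finset ι) {a x : ι → ℝ} {l c : ℝ}
    (hl : 0 < l) (hc : 0 < c) (h : ∏ i ∈ s, Real.exp (x i * (a i * l) - x i) < c) :
    ∑ i ∈ s, a i * x i ≤ l⁻¹ * (∑ i ∈ s, x i + Real.log c) := by
  rw [← Real.exp_sum, ← Real.lt_log_iff_exp_lt hc, sum_sub_distrib] at h
  have hsum : ∑ i ∈ s, x i * (a i * l) = l * ∑ i ∈ s, a i * x i := by
    rw [mul_sum]; exact sum_congr rfl fun i _ => by ring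
  rw [le_inv_mul_iff₀ hl]
  linarith

namespace MeasureTheory

variable {Ω : Type*} {m mΩ : MeasurableSpace Ω} {μ : Measure Ω} {𝒢 : Filtration ℕ mΩ}

theorem measure_inter_le_of_condExp_indicator_le [IsFiniteMeasure μ] (hm : m ≤ mΩ)
    {S : Set Ω} (hS : MeasurableSet S) {c : ℝ}
    (hc : μ[S.indicator (fun _ => (1 : ℝ)) | m] ≤ᵐ[μ] fun _ => c)
    {A : Set Ω} (hA : MeasurableSet[m] A) :
    μ (A ∩ S) ≤ ENNReal.ofReal c * μ A := by
  have hreal : μ.real (A ∩ S) ≤ c * μ.real A :=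
    calc μ.real (A ∩ S) = ∫ ω in A, S.indicator (fun _ => (1 : ℝ)) ω ∂μ := by
          rw [integral_indicator_const _ hS, measureReal_restrict_apply hS, smul_eq_mul, mul_one,
            Set.inter_comm]
      _ = ∫ ω in A, (μ[S.indicator (fun _ => (1 : ℝ)) | m]) ω ∂μ :=
          (setIntegral_condExp hm ((integrable_const _).indicator hS) hA).symm
      _ ≤ ∫ _ in A, c ∂μ :=
          setIntegral_mono_ae integrable_condExp.integrableOn (integrable_const _).integrableOn hc
      _ = c * μ.real A := by rw [setIntegral_const, smul_eq_mul, mul_comm, Measure.real]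
  rw [← ofReal_measureReal, ← ofReal_measureReal, ← ENNReal.ofReal_mul' measureReal_nonneg]
  exact ENNReal.ofReal_le_ofReal hreal

theorem setLIntegral_le_of_condExp_indicator_le [IsFiniteMeasure μ] (hm : m ≤ mΩ)
    {S : Set Ω} (hS : MeasurableSet S) {c : ℝ}
    (hc : μ[S.indicator (fun _ => (1 : ℝ)) | m] ≤ᵐ[μ] fun _ => c)
    {h : Ω → ℝ≥0∞} (hh : Measurable[m] h) :
    ∫⁻ ω in S, h ω ∂μ ≤ ENNReal.ofReal c * ∫⁻ ω, h ω ∂μ := by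
  have htrim : (μ.restrict S).trim hm ≤ (ENNReal.ofReal c • μ).trim hm := by
    refine Measure.le_iff.2 fun A hA => ?_
    rw [trim_measurableSet_eq _ hA, trim_measurableSet_eq _ hA,
      Measure.restrict_apply (hm A hA), Measure.smul_apply, smul_eq_mul]
    exact measure_inter_le_of_condExp_indicator_le hm hS hc hA
  calc ∫⁻ ω in S, h ω ∂μ = ∫⁻ ω, h ω ∂(μ.restrict S).trim hm := (lintegral_trim hm hh).symm
    _ ≤ ∫⁻ ω, h ω ∂(ENNReal.ofReal c • μ).trim hm := lintegral_mono' htrim le_rfl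
    _ = ENNReal.ofReal c * ∫⁻ ω, h ω ∂μ := by
        rw [lintegral_trim hm hh, lintegral_smul_measure, smul_eq_mul]

theorem lintegral_mul_pow_le_of_condExp_tail_le [IsFiniteMeasure μ] (hm : m ≤ mΩ)
    {L : Ω → ℕ} (hL : Measurable L) {q r : ℝ} (hq : 0 ≤ q) (hr : 1 ≤ r) (hrq : r * q < 1)
    (htail : ∀ k : ℕ,
      μ[{ω | 1 + k < L ω}.indicator (fun _ => (1 : ℝ)) | m] ≤ᵐ[μ] fun _ => q ^ k)
    {h : Ω → ℝ≥0∞} (hh : Measurable[m] h) :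
    ∫⁻ ω, h ω * ENNReal.ofReal (r ^ L ω) ∂μ
      ≤ ENNReal.ofReal (r + (r - 1) * r / (1 - r * q)) * ∫⁻ ω, h ω ∂μ := by
  set S : ℕ → Set Ω := fun k => {ω | 1 + k < L ω}
  have hS : ∀ k, MeasurableSet (S k) := fun k => hL (measurableSet_Ioi (a := 1 + k))
  have hhm : Measurable h := hh.mono hm le_rfl
  have hr0 : 0 ≤ r := by linarith
  have hrq0 : 0 ≤ r * q := mul_nonneg hr0 hq
  calc ∫⁻ ω, h ω * ENNReal.ofReal (r ^ L ω) ∂μ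
      ≤ ∫⁻ ω, (ENNReal.ofReal r * h ω +
          ∑' k : ℕ, ENNReal.ofReal ((r - 1) * r ^ (k + 1)) * (S k).indicator h ω) ∂μ := by
        refine lintegral_mono fun ω => ?_
        simpa only [Set.indicator_apply, S, Set.mem_ofPred_eq]
          using ENNReal.mul_ofReal_pow_le_add_tsum hr (L ω) (h ω)
    _ = ENNReal.ofReal r * ∫⁻ ω, h ω ∂μ +
          ∑' k : ℕ, ENNReal.ofReal ((r - 1) * r ^ (k + 1)) * ∫⁻ ω in S k, h ω ∂μ := by
        rw [lintegral_add_left (hhm.const_mul _), lintegral_const_mul _ hhm,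
          lintegral_tsum fun k => ((hhm.indicator (hS k)).const_mul _).aemeasurable]
        congr 1
        exact tsum_congr fun k => by
          rw [lintegral_const_mul' _ _ ENNReal.ofReal_ne_top, lintegral_indicator (hS k)]
    _ ≤ ENNReal.ofReal r * ∫⁻ ω, h ω ∂μ +
          ∑' k : ℕ, ENNReal.ofReal ((r - 1) * r ^ (k + 1)) *
            (ENNReal.ofReal (q ^ k) * ∫⁻ ω, h ω ∂μ) := by
        gcongr with k
        exact setLIntegral_le_of_condExp_indicator_le hm (hS k) (htail k) hh
    _ = ENNReal.ofReal (r + (r - 1) * r / (1 - r * q)) * ∫⁻ ω, h ω ∂μ := by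
        have hgeom : ∑' k : ℕ, ENNReal.ofReal ((r - 1) * r * (r * q) ^ k)
            = ENNReal.ofReal ((r - 1) * r / (1 - r * q)) := by
          rw [← ENNReal.ofReal_tsum_of_nonneg
              (fun k => mul_nonneg (mul_nonneg (by linarith) hr0) (pow_nonneg hrq0 k))
              ((summable_geometric_of_lt_one hrq0 hrq).mul_left _),
            tsum_mul_left, tsum_geometric_of_lt_one hrq0 hrq, div_eq_mul_inv]
        rw [ENNReal.ofReal_add hr0 (div_nonneg (mul_nonneg (by linarith) hr0) (by linarith)),
          add_mul, ← hgeom, ← ENNReal.tsum_mul_right]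
        congr 2 with k
        rw [← mul_assoc, ← ENNReal.ofReal_mul (mul_nonneg (by linarith) (pow_nonneg hr0 _))]
        congr 2
        ring

theorem lintegral_mul_exp_le_two_of_condExp_tail_le [IsFiniteMeasure μ] (hm : m ≤ mΩ)
    {L : Ω → ℕ} (hL : Measurable L) {χ : ℝ} (hχ0 : 0 < χ) (hχ1 : χ ≤ 1)
    (htail : ∀ k : ℕ,
      μ[{ω | 1 + k < L ω}.indicator (fun _ => (1 : ℝ)) | m] ≤ᵐ[μ] fun _ => (1 - χ / 2) ^ k)
    {h : Ω → ℝ≥0∞} (hh : Measurable[m] h) :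
    ∫⁻ ω, h ω * ENNReal.ofReal (Real.exp (L ω * (χ / 5))) ∂μ ≤ 2 * ∫⁻ ω, h ω ∂μ := by
  simp_rw [Real.exp_nat_mul]
  refine (lintegral_mul_pow_le_of_condExp_tail_le hm hL (by linarith)
    (Real.one_le_exp (by positivity)) (Real.exp_mul_one_sub_lt_one (by linarith)) htail hh).trans ?_
  rw [← ENNReal.ofReal_ofNat 2]
  gcongr
  exact Real.exp_div_five_add_div_le_two hχ0 hχ1

-- A conditional bound `E[F | m] ≤ C` is expressed as `∫⁻ h * F ≤ C * ∫⁻ h` for every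
-- nonnegative `m`-measurable weight `h`.
theorem lintegral_mul_exp_mul_sub_le (hm : m ≤ mΩ) {X Z : Ω → ℝ} (hX : Measurable[m] X)
    (hX01 : ∀ ω, X ω ∈ Set.Icc (0 : ℝ) 1)
    (hZ : ∀ h : Ω → ℝ≥0∞, Measurable[m] h →
      ∫⁻ ω, h ω * ENNReal.ofReal (Real.exp (Z ω)) ∂μ ≤ 2 * ∫⁻ ω, h ω ∂μ)
    {h : Ω → ℝ≥0∞} (hh : Measurable[m] h) :
    ∫⁻ ω, h ω * ENNReal.ofReal (Real.exp (X ω * Z ω - X ω)) ∂μ ≤ ∫⁻ ω, h ω ∂μ := by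
  set a : Ω → ℝ := fun ω => Real.exp (-X ω) * (1 - X ω)
  set b : Ω → ℝ := fun ω => Real.exp (-X ω) * X ω
  have ha0 : ∀ ω, 0 ≤ a ω := fun ω =>
    mul_nonneg (Real.exp_pos _).le (sub_nonneg.2 (hX01 ω).2)
  have hb0 : ∀ ω, 0 ≤ b ω := fun ω => mul_nonneg (Real.exp_pos _).le (hX01 ω).1
  have hha : Measurable[m] fun ω => h ω * ENNReal.ofReal (a ω) := by fun_prop
  have hhb : Measurable[m] fun ω => h ω * ENNReal.ofReal (b ω) := by fun_prop
  have hpoint : ∀ ω, Real.exp (X ω * Z ω - X ω) ≤ a ω + b ω * Real.exp (Z ω) := fun ω =>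
    calc Real.exp (X ω * Z ω - X ω) = Real.exp (-X ω) * Real.exp (X ω * Z ω) := by
          rw [← Real.exp_add]; ring_nf
      _ ≤ Real.exp (-X ω) * (1 - X ω + X ω * Real.exp (Z ω)) := by
          gcongr; exact Real.exp_mul_le_one_sub_add_mul_exp (hX01 ω) _
      _ = a ω + b ω * Real.exp (Z ω) := by ring
  calc ∫⁻ ω, h ω * ENNReal.ofReal (Real.exp (X ω * Z ω - X ω)) ∂μ
      ≤ ∫⁻ ω, (h ω * ENNReal.ofReal (a ω)
          + h ω * ENNReal.ofReal (b ω) * ENNReal.ofReal (Real.exp (Z ω))) ∂μ := by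
        refine lintegral_mono fun ω => ?_
        rw [mul_assoc, ← mul_add, ← ENNReal.ofReal_mul (hb0 ω), ← ENNReal.ofReal_add (ha0 ω)
          (mul_nonneg (hb0 ω) (Real.exp_pos _).le)]
        gcongr
        exact hpoint ω
    _ ≤ ∫⁻ ω, h ω * ENNReal.ofReal (a ω) ∂μ
          + 2 * ∫⁻ ω, h ω * ENNReal.ofReal (b ω) ∂μ := by
        rw [lintegral_add_left (hha.mono hm le_rfl)]
        gcongr
        exact hZ _ hhb
    _ = ∫⁻ ω, h ω * ENNReal.ofReal (Real.exp (-X ω) * (1 + X ω)) ∂μ := by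
        rw [← lintegral_const_mul _ (hhb.mono hm le_rfl),
          ← lintegral_add_left (hha.mono hm le_rfl)]
        refine lintegral_congr fun ω => ?_
        rw [mul_left_comm, ← mul_add, ← ENNReal.ofReal_ofNat 2,
          ← ENNReal.ofReal_mul zero_le_two, ← ENNReal.ofReal_add (ha0 ω)
          (mul_nonneg zero_le_two (hb0 ω))]
        congr 2
        ring
    _ ≤ ∫⁻ ω, h ω ∂μ := by
        refine lintegral_mono fun ω => ?_
        calc h ω * ENNReal.ofReal (Real.exp (-X ω) * (1 + X ω)) ≤ h ω * 1 := by
              gcongr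
              exact ENNReal.ofReal_le_one.2 (Real.exp_neg_mul_one_add_le_one _)
          _ = h ω := mul_one _

theorem supermartingale_prod_of_lintegral_mul_le [IsFiniteMeasure μ] {Y : ℕ → Ω → ℝ}
    (hY0 : ∀ i ω, 0 ≤ Y i ω) (hYm : ∀ i, Measurable[𝒢 (i + 1)] (Y i))
    (hY : ∀ i (h : Ω → ℝ≥0∞), Measurable[𝒢 i] h →
      ∫⁻ ω, h ω * ENNReal.ofReal (Y i ω) ∂μ ≤ ∫⁻ ω, h ω ∂μ) :
    Supermartingale (fun n ω => ∏ i ∈ range n, Y i ω) 𝒢 μ := by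
  set M : ℕ → Ω → ℝ := fun n ω => ∏ i ∈ range n, Y i ω
  have hM0 : ∀ n ω, 0 ≤ M n ω := fun n ω => prod_nonneg fun i _ => hY0 i ω
  have hMm : ∀ n, Measurable[𝒢 n] (M n) := fun n =>
    Finset.measurable_prod _ fun i hi => (hYm i).mono (𝒢.mono (mem_range.1 hi)) le_rfl
  have hstep : ∀ n s, MeasurableSet[𝒢 n] s →
      ∫⁻ ω in s, ENNReal.ofReal (M (n + 1) ω) ∂μ ≤ ∫⁻ ω in s, ENNReal.ofReal (M n ω) ∂μ := by
    intro n s hs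
    have hs' : MeasurableSet s := 𝒢.le n s hs
    calc ∫⁻ ω in s, ENNReal.ofReal (M (n + 1) ω) ∂μ
        = ∫⁻ ω, s.indicator (fun ω => ENNReal.ofReal (M n ω)) ω
            * ENNReal.ofReal (Y n ω) ∂μ := by
          rw [← lintegral_indicator hs']
          refine lintegral_congr fun ω => ?_
          by_cases hω : ω ∈ s
          · simp only [Set.indicator_of_mem hω, M, prod_range_succ,
              ENNReal.ofReal_mul (hM0 n ω)]
          · simp only [Set.indicator_of_notMem hω, zero_mul]
      _ ≤ ∫⁻ ω, s.indicator (fun ω => ENNReal.ofReal (M n ω)) ω ∂μ :=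
          hY n _ ((hMm n).ennreal_ofReal.indicator hs)
      _ = ∫⁻ ω in s, ENNReal.ofReal (M n ω) ∂μ := lintegral_indicator hs' _
  have hfin : ∀ n, ∫⁻ ω, ENNReal.ofReal (M n ω) ∂μ < ∞ := by
    intro n
    induction n with
    | zero => simp [M]
    | succ n ih =>
      have h := hstep n Set.univ MeasurableSet.univ
      rw [Measure.restrict_univ] at h
      exact h.trans_lt ih
  have hint : ∀ n, Integrable (M n) μ := fun n =>
    ⟨((hMm n).mono (𝒢.le n) le_rfl).aestronglyMeasurable,
      (hasFiniteIntegral_iff_ofReal (ae_of_all _ (hM0 n))).2 (hfin n)⟩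
  refine supermartingale_of_setIntegral_succ_le (fun n => (hMm n).stronglyMeasurable) hint
    fun n s hs => ?_
  rw [integral_eq_lintegral_of_nonneg_ae (ae_of_all _ (hM0 _)) (hint _).1.restrict,
    integral_eq_lintegral_of_nonneg_ae (ae_of_all _ (hM0 _)) (hint _).1.restrict]
  exact ENNReal.toReal_mono ((setLIntegral_le_lintegral _ _).trans_lt (hfin n)).ne
    (hstep n s hs)

theorem Supermartingale.mul_measureReal_le_integral_zero [IsFiniteMeasure μ]
    {f : ℕ → Ω → ℝ} (hf : Supermartingale f 𝒢 μ) (hf0 : 0 ≤ f) (c : ℝ) (n : ℕ) :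
    c * μ.real {ω | ∃ k ≤ n, c ≤ f k ω} ≤ ∫ ω, f 0 ω ∂μ := by
  set τ : Ω → WithTop ℕ := fun ω => (hittingBtwn f (Set.Ici c) 0 n ω : ℕ)
  have hτ : IsStoppingTime 𝒢 τ :=
    hf.stronglyAdapted.adapted.isStoppingTime_hittingBtwn measurableSet_Ici
  have hτn : ∀ ω, τ ω ≤ n := fun ω => WithTop.coe_le_coe.2 (hittingBtwn_le ω)
  have hint : Integrable (stoppedValue f τ) μ := integrable_stoppedValue ℕ hτ hf.integrable hτn
  have hB : MeasurableSet {ω | ∃ k ≤ n, c ≤ f k ω} := by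
    have h : {ω | ∃ k ≤ n, c ≤ f k ω} = ⋃ k, ⋃ (_ : k ≤ n), {ω | c ≤ f k ω} := by ext; simp
    rw [h]
    exact .iUnion fun k => .iUnion fun _ => measurableSet_le measurable_const
      ((hf.stronglyMeasurable k).measurable.mono (𝒢.le k) le_rfl)
  calc c * μ.real {ω | ∃ k ≤ n, c ≤ f k ω}
      ≤ ∫ ω in {ω | ∃ k ≤ n, c ≤ f k ω}, stoppedValue f τ ω ∂μ :=
        setIntegral_ge_of_const_le_real hB (measure_ne_top _ _)
          (fun ω ⟨k, hk, hfk⟩ => stoppedValue_hittingBtwn_mem ⟨k, ⟨Nat.zero_le k, hk⟩, hfk⟩)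
          hint.integrableOn
    _ ≤ ∫ ω, stoppedValue f τ ω ∂μ :=
        setIntegral_le_integral hint (ae_of_all _ fun ω => hf0 _ _)
    _ ≤ ∫ ω, f 0 ω ∂μ := by
        have h := hf.neg.expected_stoppedValue_mono (isStoppingTime_const 𝒢 0) hτ
          (fun ω => WithTop.coe_le_coe.2 (Nat.zero_le _)) hτn
        have hneg : stoppedValue (-f) τ = -stoppedValue f τ := rfl
        rw [hneg] at h
        simp only [stoppedValue_const, Pi.neg_apply, integral_neg] at h
        exact neg_le_neg_iff.1 h

theorem Supermartingale.measure_exists_ge_le [IsFiniteMeasure μ] {f : ℕ → Ω → ℝ}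
    (hf : Supermartingale f 𝒢 μ) (hf0 : 0 ≤ f) {c : ℝ} (hc : 0 < c) :
    μ {ω | ∃ n, c ≤ f n ω} ≤ ENNReal.ofReal ((∫ ω, f 0 ω ∂μ) / c) := by
  have hunion : {ω | ∃ n, c ≤ f n ω} = ⋃ n, {ω | ∃ k ≤ n, c ≤ f k ω} := by
    ext ω
    simp only [Set.mem_ofPred_eq, Set.mem_iUnion]
    exact ⟨fun ⟨n, hn⟩ => ⟨n, n, le_rfl, hn⟩, fun ⟨_, k, _, hk⟩ => ⟨k, hk⟩⟩
  have hmono : Monotone fun n => {ω | ∃ k ≤ n, c ≤ f k ω} :=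
    fun _ _ hmn _ ⟨k, hk, hfk⟩ => ⟨k, hk.trans hmn, hfk⟩
  rw [hunion, hmono.measure_iUnion]
  refine iSup_le fun n => ?_
  rw [← ofReal_measureReal]
  refine ENNReal.ofReal_le_ofReal ((le_div_iff₀ hc).2 ?_)
  rw [mul_comm]
  exact hf.mul_measureReal_le_integral_zero hf0 c n

theorem ofReal_one_sub_le_measure [IsProbabilityMeasure μ] {s t : Set Ω} {δ : ℝ} (hδ : 0 ≤ δ)
    (hs : μ s ≤ ENNReal.ofReal δ) (hst : sᶜ ⊆ t) : ENNReal.ofReal (1 - δ) ≤ μ t :=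
  calc ENNReal.ofReal (1 - δ) = 1 - ENNReal.ofReal δ := by
        rw [ENNReal.ofReal_sub _ hδ, ENNReal.ofReal_one]
    _ ≤ 1 - μ s := tsub_le_tsub_left hs 1
    _ ≤ μ sᶜ := tsub_le_iff_left.2 (by simpa using measure_univ_le_add_compl (μ := μ) s)
    _ ≤ μ t := measure_mono hst

end MeasureTheory

theorem run_length_accumulation_general {Ω : Type*} [mΩ : MeasurableSpace Ω]
    (ℙ : Measure Ω) [IsProbabilityMeasure ℙ]
    (χ δ : ℝ) (hχ : χ ∈ Set.Ioc (0 : ℝ) 1) (hδ : δ ∈ Set.Ioo (0 : ℝ) 1)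
    (G : Filtration ℕ mΩ)
    (X : ℕ → Ω → ℝ) (hX01 : ∀ i ω, X i ω ∈ Set.Icc (0 : ℝ) 1)
    (hXmeas : ∀ i, Measurable[G i] (X i))
    (L : ℕ → Ω → ℕ)
    (hLmeas : ∀ i, Measurable[G (i + 1)] (L i))
    (hgeo : ∀ i k : ℕ,
      ℙ[Set.indicator {ω | 1 + k < L i ω} (fun _ => (1 : ℝ)) | G i]
        ≤ᵐ[ℙ] fun _ => (1 - χ / 2) ^ k) :
    ENNReal.ofReal (1 - δ)
      ≤ ℙ {ω | ∀ n : ℕ,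
          ∑ i ∈ Finset.range (n + 1), (L i ω : ℝ) * X i ω
            ≤ (5 / χ) * (∑ i ∈ Finset.range (n + 1), X i ω + Real.log (1 / δ))} := by
  obtain ⟨hχ0, hχ1⟩ := hχ
  set Y : ℕ → Ω → ℝ := fun i ω => Real.exp (X i ω * (L i ω * (χ / 5)) - X i ω)
  have hM : Supermartingale (fun n ω => ∏ i ∈ range n, Y i ω) G ℙ :=
    supermartingale_prod_of_lintegral_mul_le (fun _ _ => (Real.exp_pos _).le)
      (fun i => by
        have hXi : Measurable[G (i + 1)] (X i) := (hXmeas i).mono (G.mono i.le_succ) le_rfl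
        have hLi := hLmeas i
        fun_prop)
      fun i h hh => lintegral_mul_exp_mul_sub_le (G.le i) (hXmeas i) (hX01 i)
        (fun _ => lintegral_mul_exp_le_two_of_condExp_tail_le (G.le i)
          ((hLmeas i).mono (G.le _) le_rfl) hχ0 hχ1 (hgeo i)) hh
  have hbad : ℙ {ω | ∃ n, 1 / δ ≤ ∏ i ∈ range n, Y i ω} ≤ ENNReal.ofReal δ := by
    simpa using hM.measure_exists_ge_le (fun n ω => prod_nonneg fun i _ => (Real.exp_pos _).le)
      (one_div_pos.2 hδ.1)
  have hgood : {ω | ∃ n, 1 / δ ≤ ∏ i ∈ range n, Y i ω}ᶜ ⊆ {ω | ∀ n : ℕ,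
      ∑ i ∈ Finset.range (n + 1), (L i ω : ℝ) * X i ω
        ≤ (5 / χ) * (∑ i ∈ Finset.range (n + 1), X i ω + Real.log (1 / δ))} := by
    intro ω hω n
    have h := sum_mul_le_of_prod_exp_lt (range (n + 1)) (by positivity) (one_div_pos.2 hδ.1)
      (not_le.1 fun h => hω ⟨n + 1, h⟩)
    rwa [inv_div] at h
  exact ofReal_one_sub_le_measure hδ.1.le hbad hgood

/-- **Generic look-back run-length accumulation (Lemma E.5).** Let `{X_i}` be a `[0,1]`-valued
process adapted to a filtration `{G_i}` and `{L_i}` positive-integer-valued with `L_i`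
`G_{i+1}`-measurable and conditionally stochastically dominated by `1` plus a geometric
random variable of success probability `χ/2`, i.e. `P(L_i > 1 + k | G_i) ≤ (1 − χ/2)^k`.
Then with probability at least `1 − δ`, for every `n`,
`∑_{i≤n} L_i X_i ≤ (5/χ)(∑_{i≤n} X_i + log(1/δ))`. -/
theorem run_length_accumulation {Ω : Type*} [mΩ : MeasurableSpace Ω]
    (ℙ : Measure Ω) [IsProbabilityMeasure ℙ]
    (χ δ : ℝ) (hχ : χ ∈ Set.Ioc (0 : ℝ) 1) (hδ : δ ∈ Set.Ioo (0 : ℝ) 1)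
    (G : Filtration ℕ mΩ)
    (X : ℕ → Ω → ℝ) (hX01 : ∀ i ω, X i ω ∈ Set.Icc (0 : ℝ) 1)
    (hXmeas : ∀ i, Measurable[G i] (X i))
    (L : ℕ → Ω → ℕ) (hL1 : ∀ i ω, 1 ≤ L i ω)
    (hLmeas : ∀ i, Measurable[G (i + 1)] (L i))
    (hgeo : ∀ i k : ℕ,
      ℙ[Set.indicator {ω | 1 + k < L i ω} (fun _ => (1 : ℝ)) | G i]
        ≤ᵐ[ℙ] fun _ => (1 - χ / 2) ^ k) :
    ENNReal.ofReal (1 - δ)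
      ≤ ℙ {ω | ∀ n : ℕ,
          ∑ i ∈ Finset.range (n + 1), (L i ω : ℝ) * X i ω
            ≤ (5 / χ) * (∑ i ∈ Finset.range (n + 1), X i ω + Real.log (1 / δ))} :=
  run_length_accumulation_general (mΩ := mΩ) ℙ χ δ hχ hδ G X hX01 hXmeas L hLmeas hgeo
end

section
/- (Analytic inequality used in the run-length martingale bound) Fix u ∈ (0,1) and define f(x) := −log( (1 − u·e^x)/(1 − u) ) on the domain [0, −log u). Then for all x ∈ [0, −(1/2)·log u], f(x) ≤ ( √u/(1 − √u) )·x. -/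
/-- **Analytic inequality used in the run-length martingale bound.** For a constant
`u ∈ (0,1)` and `f(x) := −log((1 − u·eˣ)/(1 − u))` (well defined on `[0, −log u)`),
one has `f(x) ≤ (√u/(1 − √u))·x` for all `x ∈ [0, −(1/2)·log u]`. -/
theorem run_length_analytic_inequality (u : ℝ) (hu : u ∈ Set.Ioo (0 : ℝ) 1) :
    ∀ x ∈ Set.Icc (0 : ℝ) (-(1 / 2) * Real.log u),
      -Real.log ((1 - u * Real.exp x) / (1 - u))
        ≤ (Real.sqrt u / (1 - Real.sqrt u)) * x := by
  obtain ⟨hu0, hu1⟩ := hu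
  rintro x ⟨hx0, hx1⟩
  set s := Real.sqrt u with hs
  have hs0 : 0 < s := Real.sqrt_pos.mpr hu0
  have hss : s * s = u := Real.mul_self_sqrt hu0.le
  have hs1 : s < 1 := by nlinarith
  set E := Real.exp x with hE
  have hE1 : 1 ≤ E := by
    rw [hE, ← Real.exp_zero]; exact Real.exp_le_exp.mpr hx0
  have hEs : u * E ≤ s := by
    have h1 : E ≤ 1 / s := by
      rw [hE, ← Real.exp_log (by positivity : (0:ℝ) < 1 / s)]
      apply Real.exp_le_exp.mpr
      rw [Real.log_div one_ne_zero hs0.ne', Real.log_one, hs, Real.log_sqrt hu0.le]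
      linarith
    have := mul_le_mul_of_nonneg_left h1 hu0.le
    calc u * E ≤ u * (1 / s) := this
      _ = s := by field_simp; nlinarith
  have h1ue : 0 < 1 - u * E := by linarith
  have h1u : 0 < 1 - u := by linarith
  have hlog : -Real.log ((1 - u * E) / (1 - u)) = Real.log ((1 - u) / (1 - u * E)) := by
    rw [← Real.log_inv, inv_div]
  rw [hlog]
  have hstep : Real.log ((1 - u) / (1 - u * E)) ≤ (1 - u) / (1 - u * E) - 1 :=
    Real.log_le_sub_one_of_pos (by positivity)
  have hEx : E - 1 ≤ x * E := by
    have h2 : 1 - x ≤ Real.exp (-x) := by linarith [Real.add_one_le_exp (-x)]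
    have h3 : E * Real.exp (-x) = 1 := by
      rw [hE, ← Real.exp_add]; simp
    nlinarith [Real.exp_pos x]
  have hfin : (1 - u) / (1 - u * E) - 1 ≤ s / (1 - s) * x := by
    rw [div_sub_one h1ue.ne', div_le_iff₀ h1ue, div_mul_eq_mul_div, div_mul_eq_mul_div,
      le_div_iff₀ (by linarith : (0:ℝ) < 1 - s)]
    have h4 : u * (E - 1) ≤ x * (u * E) := by nlinarith
    nlinarith [mul_nonneg hx0 (sub_nonneg.mpr hEs)]
  linarith
end

section
/- (Anticoncentration of the inflated uniform sphere law) Let d ≥ 1 and let Y be uniformly distributed on the sphere of radius √(3d) in ℝ^d. Then for every nonzero u ∈ ℝ^d, P( Yᵀu ≥ ‖u‖ ) ≥ 0.15·(1 − e^{−d/3}). -/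
/-!
Let `G` be a standard Gaussian vector independent of `Y`. By rotation invariance of both laws,
`P(‖G‖ ≤ ⟪Y, G⟫)` equals `P(‖u‖ ≤ ⟪Y, u⟫)` (condition on `G`, which is a.s. nonzero) and also
`P(‖G‖ ≤ √(3d) G₀)` (condition on `Y`, which has norm `√(3d)`). The last event contains
`{G₀ ≥ 1} ∩ {∑_{j ≥ 1} G_j² ≤ 3d - 1}`, whose probability is at least
`0.1575 · (1 - (20/21) e^{-d/3}) ≥ 0.15 · (1 - e^{-d/3})`: the first factor is a numerical bound on
the Gaussian tail at `1`, the second a Chernoff bound for the χ² law with parameter `7/20`.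
-/

open MeasureTheory ProbabilityTheory Real Set
open scoped RealInnerProductSpace ENNReal

section Isotropic

variable {E : Type*} [NormedAddCommGroup E] [InnerProductSpace ℝ E]

theorem LinearIsometryEquiv.exists_apply_eq_of_norm_eq {v w : E} (h : ‖v‖ = ‖w‖) :
    ∃ f : E ≃ₗᵢ[ℝ] E, f v = w :=
  ⟨_, Submodule.reflection_sub h⟩

theorem setOf_norm_le_inner_eq {u : E} (hu : u ≠ 0) :
    {y : E | ‖u‖ ≤ ⟪y, u⟫} = {y | 1 ≤ ⟪‖u‖⁻¹ • u, y⟫} := by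
  ext y
  rw [mem_ofPred_eq, mem_ofPred_eq, real_inner_smul_left, real_inner_comm,
    le_inv_mul_iff₀ (norm_pos_iff.2 hu), mul_one]

variable [MeasurableSpace E] [BorelSpace E] {μ : Measure E}

theorem measure_preimage_linearIsometryEquiv (hμ : ∀ f : E ≃ₗᵢ[ℝ] E, μ.map f = μ)
    (f : E ≃ₗᵢ[ℝ] E) (s : Set E) : μ (f ⁻¹' s) = μ s := by
  conv_rhs => rw [← hμ f]
  exact (f.toHomeomorph.toMeasurableEquiv.map_apply s).symm

theorem measure_setOf_inner_eq_of_norm_eq (hμ : ∀ f : E ≃ₗᵢ[ℝ] E, μ.map f = μ)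
    (P : ℝ → ℝ → Prop) {v w : E} (h : ‖v‖ = ‖w‖) :
    μ {x | P ‖x‖ ⟪v, x⟫} = μ {x | P ‖x‖ ⟪w, x⟫} := by
  obtain ⟨f, hf⟩ := LinearIsometryEquiv.exists_apply_eq_of_norm_eq h.symm
  rw [← measure_preimage_linearIsometryEquiv hμ f]
  congr 1
  ext x
  simp [← hf]

theorem measure_norm_le_inner_eq [FiniteDimensional ℝ E] {ν γ : Measure E}
    [IsProbabilityMeasure ν] [IsProbabilityMeasure γ]
    (hν : ∀ f : E ≃ₗᵢ[ℝ] E, ν.map f = ν) (hγ : ∀ f : E ≃ₗᵢ[ℝ] E, γ.map f = γ)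
    {R : ℝ} (hνR : ∀ᵐ y ∂ν, ‖y‖ = R) (hγ0 : γ {0} = 0) {u y₀ : E} (hu : u ≠ 0)
    (hy₀ : ‖y₀‖ = R) :
    ν {y | ‖u‖ ≤ ⟪y, u⟫} = γ {g | ‖g‖ ≤ ⟪y₀, g⟫} := by
  have hS : MeasurableSet {z : E × E | ‖z.2‖ ≤ ⟪z.1, z.2⟫} :=
    measurableSet_le (by fun_prop) (by fun_prop)
  have hfst : ∀ᵐ y ∂ν, γ {g | ‖g‖ ≤ ⟪y, g⟫} = γ {g | ‖g‖ ≤ ⟪y₀, g⟫} := by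
    filter_upwards [hνR] with y hy
    exact measure_setOf_inner_eq_of_norm_eq hγ (fun r s => r ≤ s) (hy.trans hy₀.symm)
  have hsnd : ∀ᵐ g ∂γ, ν {y | ‖g‖ ≤ ⟪y, g⟫} = ν {y | ‖u‖ ≤ ⟪y, u⟫} := by
    filter_upwards [measure_eq_zero_iff_ae_notMem.1 hγ0] with g (hg : g ≠ 0)
    rw [setOf_norm_le_inner_eq hg, setOf_norm_le_inner_eq hu]
    refine measure_setOf_inner_eq_of_norm_eq hν (fun _ s => 1 ≤ s) ?_
    simp [norm_smul, hg, hu]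
  calc ν {y | ‖u‖ ≤ ⟪y, u⟫} = ∫⁻ g, ν {y | ‖g‖ ≤ ⟪y, g⟫} ∂γ := by
        rw [lintegral_congr_ae hsnd, lintegral_const, measure_univ, mul_one]
    _ = ν.prod γ {z : E × E | ‖z.2‖ ≤ ⟪z.1, z.2⟫} := (Measure.prod_apply_symm hS).symm
    _ = ∫⁻ y, γ {g | ‖g‖ ≤ ⟪y, g⟫} ∂ν := Measure.prod_apply hS
    _ = γ {g | ‖g‖ ≤ ⟪y₀, g⟫} := by
        rw [lintegral_congr_ae hfst, lintegral_const, measure_univ, mul_one]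

end Isotropic

theorem exp_neg_le_one_sub_add_sq_div_two {t : ℝ} (ht : 0 ≤ t) :
    exp (-t) ≤ 1 - t + t ^ 2 / 2 := by
  rw [exp_neg, inv_le_iff_one_le_mul₀ (exp_pos t), mul_comm]
  calc (1 : ℝ) ≤ (1 + t + t ^ 2 / 2) * (1 - t + t ^ 2 / 2) := by nlinarith [pow_nonneg ht 4]
    _ ≤ exp t * (1 - t + t ^ 2 / 2) := by
        gcongr
        · nlinarith [sq_nonneg (t - 1)]
        · exact quadratic_le_exp_of_nonneg ht

theorem integral_exp_neg_half_mul_sq_le :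
    ∫ x in (0 : ℝ)..1, exp (-(1 / 2) * x ^ 2) ≤ 103 / 120 := by
  calc ∫ x in (0 : ℝ)..1, exp (-(1 / 2) * x ^ 2)
      ≤ ∫ x in (0 : ℝ)..1, (1 - x ^ 2 / 2 + x ^ 4 / 8) := by
        refine intervalIntegral.integral_mono_on zero_le_one
          (Continuous.intervalIntegrable (by fun_prop) _ _)
          (Continuous.intervalIntegrable (by fun_prop) _ _) fun x _ => ?_
        convert exp_neg_le_one_sub_add_sq_div_two (t := x ^ 2 / 2) (by positivity) using 1 <;>
          ring_nf
    _ = 103 / 120 := by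
        rw [intervalIntegral.integral_add, intervalIntegral.integral_sub,
          intervalIntegral.integral_div, intervalIntegral.integral_div]
        · norm_num
        all_goals exact Continuous.intervalIntegrable (by fun_prop) _ _

theorem gaussianPDFReal_zero_one :
    gaussianPDFReal 0 1 = fun x => (√(2 * π))⁻¹ * exp (-(1 / 2) * x ^ 2) := by
  ext x
  simp only [gaussianPDFReal, NNReal.coe_one, mul_one, sub_zero]
  ring_nf

theorem ofReal_le_gaussianReal_Ici_one :
    ENNReal.ofReal (63 / 400) ≤ gaussianReal 0 1 (Ici 1) := by
  have hint : Integrable (fun x : ℝ => exp (-(1 / 2) * x ^ 2)) :=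
    integrable_exp_neg_mul_sq (by norm_num)
  have htail : √(2 * π) / 2 - 103 / 120 ≤ ∫ x in Ioi (1 : ℝ), exp (-(1 / 2) * x ^ 2) := by
    have hsplit := intervalIntegral.integral_interval_add_Ioi (a := 0) (b := 1)
      hint.integrableOn hint.integrableOn
    rw [integral_gaussian_Ioi, show π / (1 / 2) = 2 * π by ring] at hsplit
    linarith [integral_exp_neg_half_mul_sq_le]
  have hsqrt : 1030 / 411 ≤ √(2 * π) := le_sqrt_of_sq_le (by nlinarith [pi_gt_d6])
  rw [gaussianReal_apply_eq_integral 0 one_ne_zero, gaussianPDFReal_zero_one, integral_const_mul,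
    integral_Ici_eq_integral_Ioi]
  apply ENNReal.ofReal_le_ofReal
  rw [le_inv_mul_iff₀ (by positivity)]
  nlinarith

theorem lintegral_exp_mul_sq_gaussianReal {c : ℝ} (hc : c < 1 / 2) :
    ∫⁻ x, ENNReal.ofReal (exp (c * x ^ 2)) ∂gaussianReal 0 1
      = ENNReal.ofReal (√(1 - 2 * c))⁻¹ := by
  have hb : 0 < 1 / 2 - c := by linarith
  have hdensity : ∀ x, gaussianPDF 0 1 x * ENNReal.ofReal (exp (c * x ^ 2))
      = ENNReal.ofReal ((√(2 * π))⁻¹ * exp (-(1 / 2 - c) * x ^ 2)) := by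
    intro x
    rw [gaussianPDF, gaussianPDFReal_zero_one, ← ENNReal.ofReal_mul (by positivity), mul_assoc,
      ← exp_add]
    ring_nf
  rw [gaussianReal_of_var_ne_zero 0 one_ne_zero,
    lintegral_withDensity_eq_lintegral_mul _ (measurable_gaussianPDF 0 1) (by fun_prop)]
  simp_rw [Pi.mul_apply, hdensity]
  rw [← ofReal_integral_eq_lintegral_ofReal
      ((integrable_exp_neg_mul_sq hb).const_mul _) (ae_of_all _ fun _ => by positivity),
    integral_const_mul, integral_gaussian]
  congr 1
  rw [show π / (1 / 2 - c) = 2 * π / (1 - 2 * c) by field_simp, sqrt_div' _ (by linarith)]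
  field_simp

theorem lintegral_pi_prod_eq_pow {ι α : Type*} [Fintype ι] [MeasurableSpace α] {μ : Measure α}
    [IsProbabilityMeasure μ] {f : α → ℝ≥0∞} (hf : Measurable f) :
    ∫⁻ x, ∏ i, f (x i) ∂Measure.pi (fun _ : ι => μ) = (∫⁻ a, f a ∂μ) ^ Fintype.card ι := by
  rw [lintegral_prod_eq_prod_lintegral_of_indepFun _ _ (iIndepFun_pi fun _ => hf.aemeasurable)
      fun i => hf.comp (measurable_pi_apply i),
    Finset.prod_congr rfl fun i _ => (measurePreserving_eval (fun _ => μ) i).lintegral_comp hf,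
    Finset.prod_const, Finset.card_univ]

theorem pi_gaussianReal_le_sum_sq_le {ι : Type*} [Fintype ι] {c : ℝ} (hc0 : 0 ≤ c)
    (hc : c < 1 / 2) (t : ℝ) :
    Measure.pi (fun _ : ι => gaussianReal 0 1) {x | t ≤ ∑ i, x i ^ 2}
      ≤ ENNReal.ofReal (exp (-(c * t)) * (√(1 - 2 * c))⁻¹ ^ Fintype.card ι) := by
  set f : (ι → ℝ) → ℝ≥0∞ := fun x => ∏ i, ENNReal.ofReal (exp (c * x i ^ 2))
  have hf : ∀ x, f x = ENNReal.ofReal (exp (c * ∑ i, x i ^ 2)) := by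
    intro x
    rw [Finset.mul_sum, exp_sum, ENNReal.ofReal_prod_of_nonneg fun _ _ => (exp_pos _).le]
  have hsub : {x : ι → ℝ | t ≤ ∑ i, x i ^ 2} ⊆ {x | ENNReal.ofReal (exp (c * t)) ≤ f x} := by
    intro x hx
    rw [mem_ofPred_eq, hf]
    gcongr
    exact hx
  calc _ ≤ _ := measure_mono hsub
    _ ≤ (∫⁻ x, f x ∂Measure.pi (fun _ : ι => gaussianReal 0 1)) / ENNReal.ofReal (exp (c * t)) :=
        meas_ge_le_lintegral_div (by fun_prop) (by simp [exp_pos]) ENNReal.ofReal_ne_top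
    _ = _ := by
        simp only [f]
        rw [lintegral_pi_prod_eq_pow (f := fun y => ENNReal.ofReal (exp (c * y ^ 2))) (by fun_prop),
          lintegral_exp_mul_sq_gaussianReal hc, ← ENNReal.ofReal_pow (by positivity),
          ← ENNReal.ofReal_div_of_pos (exp_pos _), exp_neg, div_eq_inv_mul]

theorem exp_mul_inv_sqrt_pow_le (n : ℕ) :
    exp (-(7 / 20 * (3 * n + 2))) * (√(1 - 2 * (7 / 20)))⁻¹ ^ n
      ≤ 20 / 21 * exp (-(n + 1) / 3) := by
  have hsqrt : (√(1 - 2 * (7 / 20)))⁻¹ ≤ exp (43 / 60) := by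
    rw [← sqrt_inv, sqrt_le_left (exp_pos _).le, ← exp_nat_mul]
    calc (1 - 2 * (7 / 20) : ℝ)⁻¹ ≤ 1 + 43 / 30 + (43 / 30) ^ 2 / 2 := by norm_num
      _ ≤ exp (43 / 30) := quadratic_le_exp_of_nonneg (by norm_num)
      _ = exp ((2 : ℕ) * (43 / 60)) := by norm_num
  have hexp : exp (-(11 / 30)) ≤ 20 / 21 := by
    rw [exp_neg, inv_le_comm₀ (exp_pos _) (by norm_num)]
    linarith [add_one_le_exp (11 / 30 : ℝ)]
  calc exp (-(7 / 20 * (3 * n + 2))) * (√(1 - 2 * (7 / 20)))⁻¹ ^ n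
      ≤ exp (-(7 / 20 * (3 * n + 2))) * exp (43 / 60) ^ n := by gcongr
    _ = exp (-(11 / 30)) * exp (-(n + 1) / 3) := by
        rw [← exp_nat_mul, ← exp_add, ← exp_add]
        ring_nf
    _ ≤ 20 / 21 * exp (-(n + 1) / 3) := by gcongr

theorem pi_gaussianReal_sum_sq_gt_le (n : ℕ) :
    Measure.pi (fun _ : Fin n => gaussianReal 0 1) {x | (3 * n + 2 : ℝ) < ∑ i, x i ^ 2}
      ≤ ENNReal.ofReal (20 / 21 * exp (-(n + 1) / 3)) := by
  calc _ ≤ Measure.pi (fun _ : Fin n => gaussianReal 0 1) {x | 3 * n + 2 ≤ ∑ i, x i ^ 2} :=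
        measure_mono (ofPred_subset_ofPred.2 fun _ => le_of_lt)
    _ ≤ _ := (pi_gaussianReal_le_sum_sq_le (c := 7 / 20) (by norm_num) (by norm_num) _).trans ?_
  rw [Fintype.card_fin]
  exact ENNReal.ofReal_le_ofReal (exp_mul_inv_sqrt_pow_le n)

theorem ofReal_le_pi_gaussianReal_sum_sq_le (n : ℕ) :
    ENNReal.ofReal (1 - 20 / 21 * exp (-(n + 1) / 3))
      ≤ Measure.pi (fun _ : Fin n => gaussianReal 0 1) {x | ∑ i, x i ^ 2 ≤ (3 * n + 2 : ℝ)} := by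
  have hcompl : {x : Fin n → ℝ | ∑ i, x i ^ 2 ≤ (3 * n + 2 : ℝ)}
      = {x | (3 * n + 2 : ℝ) < ∑ i, x i ^ 2}ᶜ := by
    ext x
    simp
  rw [hcompl, prob_compl_eq_one_sub (measurableSet_lt (by fun_prop) (by fun_prop)),
    ENNReal.ofReal_sub _ (by positivity), ENNReal.ofReal_one]
  exact tsub_le_tsub_left (pi_gaussianReal_sum_sq_gt_le n) 1

theorem stdGaussian_singleton_zero {ι : Type*} [Fintype ι] [Nonempty ι] :
    stdGaussian (EuclideanSpace ℝ ι) {0} = 0 := by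
  have := nullSingletonClass_gaussianReal (μ := 0) one_ne_zero
  have hpre : (WithLp.toLp 2 : (ι → ℝ) → EuclideanSpace ℝ ι) ⁻¹' {0} = univ.pi fun _ => {0} := by
    ext x
    simp [funext_iff]
  rw [← map_pi_eq_stdGaussian, Measure.map_apply (by fun_prop) (measurableSet_singleton 0), hpre,
    Measure.pi_pi]
  simp

theorem norm_toLp_le_sqrt_mul_apply_zero {n : ℕ} {x : Fin (n + 1) → ℝ} (h0 : 1 ≤ x 0)
    (hsucc : ∑ j : Fin n, x j.succ ^ 2 ≤ 3 * n + 2) :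
    ‖WithLp.toLp 2 x‖ ≤ √(3 * (n + 1)) * x 0 := by
  rw [EuclideanSpace.norm_eq, ← sqrt_sq (zero_le_one.trans h0), ← sqrt_mul (by positivity)]
  gcongr
  simp only [norm_eq_abs, sq_abs, Fin.sum_univ_succ]
  have hsq : 1 ≤ x 0 ^ 2 := one_le_pow₀ h0
  nlinarith

theorem ofReal_le_stdGaussian_norm_le_mul_apply_zero (n : ℕ) :
    ENNReal.ofReal (3 / 20 * (1 - exp (-(n + 1) / 3)))
      ≤ stdGaussian (EuclideanSpace ℝ (Fin (n + 1))) {g | ‖g‖ ≤ √(3 * (n + 1)) * g 0} := by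
  set B : Set (ℝ × (Fin n → ℝ)) := Ici 1 ×ˢ {w | ∑ j, w j ^ 2 ≤ (3 * n + 2 : ℝ)}
  have hB : MeasurableSet B :=
    measurableSet_Ici.prod (measurableSet_le (by fun_prop) (by fun_prop))
  have hsub : MeasurableEquiv.piFinSuccAbove (fun _ => ℝ) 0 ⁻¹' B
      ⊆ WithLp.toLp 2 ⁻¹' {g : EuclideanSpace ℝ (Fin (n + 1)) | ‖g‖ ≤ √(3 * (n + 1)) * g 0} := by
    rintro x ⟨h0, hsucc⟩
    simp only [MeasurableEquiv.piFinSuccAbove_apply, Fin.insertNthEquiv_zero,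
      Fin.consEquiv_symm_apply, mem_Ici, mem_ofPred_eq] at h0 hsucc
    exact norm_toLp_le_sqrt_mul_apply_zero h0 hsucc
  have hprod : Measure.pi (fun _ => gaussianReal 0 1)
        (MeasurableEquiv.piFinSuccAbove (fun _ => ℝ) 0 ⁻¹' B)
      = gaussianReal 0 1 (Ici 1) * Measure.pi (fun _ : Fin n => gaussianReal 0 1)
          {w | ∑ j, w j ^ 2 ≤ (3 * n + 2 : ℝ)} := by
    rw [(measurePreserving_piFinSuccAbove (fun _ => gaussianReal 0 1) 0).measure_preimage
      hB.nullMeasurableSet, Measure.prod_prod]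
  rw [← map_pi_eq_stdGaussian,
    Measure.map_apply (by fun_prop) (measurableSet_le (by fun_prop) (by fun_prop))]
  calc ENNReal.ofReal (3 / 20 * (1 - exp (-(n + 1) / 3)))
      ≤ ENNReal.ofReal (63 / 400) * ENNReal.ofReal (1 - 20 / 21 * exp (-(n + 1) / 3)) := by
        rw [← ENNReal.ofReal_mul (by norm_num)]
        exact ENNReal.ofReal_le_ofReal (by nlinarith [exp_pos (-(n + 1) / 3 : ℝ)])
    _ ≤ _ := mul_le_mul' ofReal_le_gaussianReal_Ici_one (ofReal_le_pi_gaussianReal_sum_sq_le n)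
    _ = _ := hprod.symm
    _ ≤ _ := measure_mono hsub

/-- **Anticoncentration of the inflated uniform sphere law.** If `Y` is uniformly
distributed on the sphere of radius `√(3d)` in `ℝ^d` (characterized here as a probability
measure giving full mass to that sphere and invariant under every linear isometry of
`ℝ^d`), then for every nonzero `u`, `P(Yᵀu ≥ ‖u‖) ≥ 0.15·(1 − e^{−d/3})`. -/
theorem sphere_anticoncentration (d : ℕ) (hd : 1 ≤ d)
    (ν : Measure (EuclideanSpace ℝ (Fin d))) [IsProbabilityMeasure ν]
    (hsupp : ν (Metric.sphere (0 : EuclideanSpace ℝ (Fin d)) (Real.sqrt (3 * d))) = 1)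
    (hinv : ∀ f : EuclideanSpace ℝ (Fin d) ≃ₗᵢ[ℝ] EuclideanSpace ℝ (Fin d),
      Measure.map f ν = ν)
    (u : EuclideanSpace ℝ (Fin d)) (hu : u ≠ 0) :
    ENNReal.ofReal (0.15 * (1 - Real.exp (-(d : ℝ) / 3)))
      ≤ ν {y | ‖u‖ ≤ ⟪y, u⟫} := by
  obtain ⟨n, rfl⟩ : ∃ n, d = n + 1 := ⟨d - 1, by omega⟩
  set R := √(3 * ((n + 1 : ℕ) : ℝ))
  have hνR : ∀ᵐ y ∂ν, ‖y‖ = R := by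
    filter_upwards [mem_ae_iff.2
      ((prob_compl_eq_zero_iff Metric.isClosed_sphere.measurableSet).2 hsupp)] with y hy
    exact mem_sphere_zero_iff_norm.1 hy
  set y₀ : EuclideanSpace ℝ (Fin (n + 1)) := R • EuclideanSpace.single 0 1
  have hy₀ : ‖y₀‖ = R := by
    rw [norm_smul, PiLp.norm_single, norm_one, mul_one, norm_of_nonneg (sqrt_nonneg _)]
  rw [measure_norm_le_inner_eq hinv (fun f => stdGaussian_map f) hνR stdGaussian_singleton_zero hu
    hy₀]
  calc ENNReal.ofReal (0.15 * (1 - exp (-((n + 1 : ℕ) : ℝ) / 3)))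
      = ENNReal.ofReal (3 / 20 * (1 - exp (-(n + 1) / 3))) := by push_cast; norm_num
    _ ≤ stdGaussian (EuclideanSpace ℝ (Fin (n + 1))) {g | ‖g‖ ≤ √(3 * (n + 1)) * g 0} :=
        ofReal_le_stdGaussian_norm_le_mul_apply_zero n
    _ = stdGaussian (EuclideanSpace ℝ (Fin (n + 1))) {g | ‖g‖ ≤ ⟪y₀, g⟫} := by
        simp [y₀, R, real_inner_smul_left, EuclideanSpace.inner_single_left]
end
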